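/- arXiv:1911.06924 — 8 statements merged into one kernel-verified Lean document; each statement's English description precedes it below -/
import Mathlib

section
/- Let f : {0,1}^n → {0,1} be a function with exactly m decreasing edges. Then every monotone function g : {0,1}^n → {0,1} differs from f on at least m/n points of {0,1}^n; consequently, dist(f, Mono) ≥ m/(n·2^n). -/
open Finset

attribute [local instance] Classical.propDecidable

variable {n : ℕ}

/-- The edge of the hypercube along dimension `i` at `x` (the pair
`{x^{(i→0)}, x^{(i→1)}}`) is decreasing for `f`. -/
def decEdge (f : (Fin n → Bool) → Bool) (x : Fin n → Bool) (i : Fin n) : Prop :=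
  f (Function.update x i false) = true ∧ f (Function.update x i true) = false

/-- `x` with its `i`-th coordinate flipped. -/
def flipC (x : Fin n → Bool) (i : Fin n) : Fin n → Bool := Function.update x i (!(x i))

/-- `g` is monotone. -/
def monoB (g : (Fin n → Bool) → Bool) : Prop :=
  ∀ x y : Fin n → Bool, (∀ i, x i ≤ y i) → g x ≤ g y

/-- Distance of `f` to the set of monotone functions. -/
noncomputable def distMono (f : (Fin n → Bool) → Bool) : ℝ :=
  sInf {d : ℝ | ∃ g : (Fin n → Bool) → Bool, monoB g ∧
    d = ((univ.filter fun x => f x ≠ g x).card : ℝ) / 2 ^ n}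

/-- `I_f⁻(x)`: the number of decreasing edges of `f` incident on `x`. -/
noncomputable def Iminus (f : (Fin n → Bool) → Bool) (x : Fin n → Bool) : ℕ :=
  (univ.filter fun i => decEdge f x i).card

/-- The number of decreasing edges of `f` (each edge represented by its lower
endpoint together with its dimension). -/
noncomputable def numDecEdges (f : (Fin n → Bool) → Bool) : ℕ :=
  (univ.filter fun q : (Fin n → Bool) × Fin n => q.1 q.2 = false ∧ decEdge f q.1 q.2).card

/-- The event Capture(x, S, f). -/
def Capture (f : (Fin n → Bool) → Bool) (S : Finset (Fin n)) (x : Fin n → Bool) : Prop :=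
  ∃ i ∈ S, decEdge f x i ∧ ∀ j ∈ S \ {i}, ¬ decEdge f (flipC x i) j

/-- Hamming weight of `x` restricted to the coordinates in `M`. -/
noncomputable def wt (M : Finset (Fin n)) (x : Fin n → Bool) : ℕ :=
  (M.filter fun i => x i = true).card

/-- `g` is unate. -/
def unate (g : (Fin n → Bool) → Bool) : Prop :=
  ∃ σ : Fin n → Bool, monoB (fun x => g (fun i => xor (x i) (σ i)))

/-- Distance of `f` to the set of unate functions. -/
noncomputable def distUnate (f : (Fin n → Bool) → Bool) : ℝ :=
  sInf {d : ℝ | ∃ g : (Fin n → Bool) → Bool, unate g ∧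
    d = ((univ.filter fun x => f x ≠ g x).card : ℝ) / 2 ^ n}

/-- `g` is a `k`-junta. -/
def isJunta (k : ℕ) (g : (Fin n → Bool) → Bool) : Prop :=
  ∃ J : Finset (Fin n), J.card ≤ k ∧
    ∀ x y : Fin n → Bool, (∀ i ∈ J, x i = y i) → g x = g y

/-- Distance of `f` to the set of `k`-juntas. -/
noncomputable def distJunta (k : ℕ) (f : (Fin n → Bool) → Bool) : ℝ :=
  sInf {d : ℝ | ∃ g : (Fin n → Bool) → Bool, isJunta k g ∧
    d = ((univ.filter fun x => f x ≠ g x).card : ℝ) / 2 ^ n}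

/-- `I⁻_{f,red}(x)` for the coloring `col` (an edge is identified by its lower
endpoint along its dimension; `col e i = true` means the edge along dimension `i`
at `e` is red). -/
noncomputable def IredCol (f : (Fin n → Bool) → Bool)
    (col : (Fin n → Bool) → Fin n → Bool) (x : Fin n → Bool) : ℕ :=
  if f x = true then
    (univ.filter fun i => decEdge f x i ∧ col (Function.update x i false) i = true).card
  else 0

/-- `I⁻_{f,blue}(x)` for the coloring `col`. -/
noncomputable def IblueCol (f : (Fin n → Bool) → Bool)
    (col : (Fin n → Bool) → Fin n → Bool) (x : Fin n → Bool) : ℕ :=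
  if f x = false then
    (univ.filter fun i => decEdge f x i ∧ col (Function.update x i false) i = false).card
  else 0

/-- `Ψ_M`: the middle layer of the subcube `{0,1}^M`. -/
noncomputable def PsiSet (M : Finset (Fin n)) : Finset (↥M → Bool) :=
  univ.filter fun z => (univ.filter fun i : ↥M => z i = true).card = n / 4

/-- `x` is an erased point (for parameter `κ` and control set `M`). -/
def ErasedPt (κ : ℝ) (M : Finset (Fin n)) (x : Fin n → Bool) : Prop :=
  wt M x = n / 4 ∧ |(wt Mᶜ x : ℝ) - (n : ℝ) / 4| ≤ (n : ℝ) ^ κ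

/-- `Maj(x_{M̄})`: majority on the coordinates outside `M`. -/
noncomputable def MajBar (M : Finset (Fin n)) (x : Fin n → Bool) : Bool :=
  decide (n / 4 < wt Mᶜ x)

/-- `F` is a completion of the `D⁻` instance determined by `(M, P)`. -/
def DminusCompletion (κ : ℝ) (M : Finset (Fin n)) (P : Finset (↥M → Bool))
    (F : (Fin n → Bool) → Bool) : Prop :=
  (∀ x, wt M x < n / 4 → F x = false) ∧
  (∀ x, n / 4 < wt M x → F x = true) ∧
  (∀ x, wt M x = n / 4 → ¬ ErasedPt κ M x →
    F x = if (fun i : ↥M => x i.1) ∈ P then MajBar M x else !(MajBar M x))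

/-- The function `F` of Statement 12: `F(x) = 1` iff `|x_M| > n/4`, or
`|x_M| = n/4` and `x_M ∉ P`. -/
noncomputable def DplusF (M : Finset (Fin n)) (P : Finset (↥M → Bool))
    (x : Fin n → Bool) : Bool :=
  if n / 4 < wt M x then true
  else if wt M x = n / 4 ∧ (fun i : ↥M => x i.1) ∉ P then true
  else false

/- Every decreasing edge has an endpoint on which `f` and a monotone `g` disagree, and each
point is an endpoint of only `n` edges; so the decreasing edges number at most `n` times the
disagreements. -/

theorem monoB.apply_update_false_le {g : (Fin n → Bool) → Bool} (hg : monoB g)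
    (x : Fin n → Bool) (i : Fin n) :
    g (Function.update x i false) ≤ g (Function.update x i true) := by
  refine hg _ _ fun j => ?_
  rcases eq_or_ne j i with rfl | hj
  · simp
  · simp [hj]

theorem decEdge.exists_apply_update_ne {f g : (Fin n → Bool) → Bool} {x : Fin n → Bool}
    {i : Fin n} (hf : decEdge f x i) (hg : monoB g) :
    ∃ b, f (Function.update x i b) ≠ g (Function.update x i b) := by
  by_contra! hfg
  have hle := hg.apply_update_false_le x i
  rw [← hfg, ← hfg, hf.1, hf.2] at hle
  exact absurd hle (by decide)

theorem numDecEdges_le_card_ne_mul (f : (Fin n → Bool) → Bool) {g : (Fin n → Bool) → Bool}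
    (hg : monoB g) : numDecEdges f ≤ (univ.filter fun x => f x ≠ g x).card * n := by
  set D := univ.filter fun x => f x ≠ g x
  have hcover : (univ.filter fun q : (Fin n → Bool) × Fin n =>
      q.1 q.2 = false ∧ decEdge f q.1 q.2) ⊆
      D.biUnion fun y => univ.image fun i => (Function.update y i false, i) := by
    rintro ⟨x, i⟩ hq
    obtain ⟨hlow, hdec⟩ := (mem_filter.1 hq).2
    obtain ⟨b, hb⟩ := hdec.exists_apply_update_ne hg
    refine mem_biUnion.2 ⟨Function.update x i b, by simpa [D] using hb,
      mem_image.2 ⟨i, mem_univ _, ?_⟩⟩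
    rw [Function.update_idem, ← hlow, Function.update_eq_self]
  calc numDecEdges f ≤ ∑ y ∈ D, (univ.image fun i => (Function.update y i false, i)).card :=
        (card_le_card hcover).trans card_biUnion_le
    _ ≤ ∑ _y ∈ D, n := sum_le_sum fun y _ => card_image_le.trans (card_fin n).le
    _ = D.card * n := sum_const_nat fun _ _ => rfl

theorem stmt0_general (n : ℕ) (f : (Fin n → Bool) → Bool) (m : ℕ)
    (hm : numDecEdges f = m) :
    (∀ g : (Fin n → Bool) → Bool, monoB g →
      (m : ℝ) / n ≤ ((univ.filter fun x => f x ≠ g x).card : ℝ)) ∧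
    (m : ℝ) / (n * 2 ^ n) ≤ distMono f := by
  have hdisagree : ∀ g : (Fin n → Bool) → Bool, monoB g →
      (m : ℝ) / n ≤ ((univ.filter fun x => f x ≠ g x).card : ℝ) := fun g hg =>
    div_le_of_le_mul₀ n.cast_nonneg (Nat.cast_nonneg _)
      (mod_cast hm ▸ numDecEdges_le_card_ne_mul f hg)
  refine ⟨hdisagree, le_csInf ⟨_, fun _ => true, fun _ _ _ => le_rfl, rfl⟩ ?_⟩
  rintro _ ⟨g, hg, rfl⟩
  rw [← div_div]
  exact div_le_div_of_nonneg_right (hdisagree g hg) (by positivity)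

/-- if `f` has exactly `m` decreasing edges, then every monotone `g`
differs from `f` on at least `m/n` points, hence `dist(f, Mono) ≥ m/(n·2^n)`. -/
theorem stmt0 (n : ℕ) (hn : 0 < n) (f : (Fin n → Bool) → Bool) (m : ℕ)
    (hm : numDecEdges f = m) :
    (∀ g : (Fin n → Bool) → Bool, monoB g →
      (m : ℝ) / n ≤ ((univ.filter fun x => f x ≠ g x).card : ℝ)) ∧
    (m : ℝ) / (n * 2 ^ n) ≤ distMono f :=
  stmt0_general n f m hm
end

section
/- Let f : {0,1}^n → {0,1} and let E be a set of decreasing edges of f that forms a matching, i.e., no two edges in E share an endpoint. Then every monotone function g : {0,1}^n → {0,1} differs from f on at least |E| points of {0,1}^n; consequently, dist(f, Mono) ≥ |E|/2^n. -/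
open Finset

attribute [local instance] Classical.propDecidable

variable {n : ℕ}

/-! A monotone `g` cannot take the values `1, 0` at the lower and upper end of an edge, so it
disagrees with `f` at an endpoint of every decreasing edge of `f`; for a matching these
endpoints are distinct points. -/

theorem Finset.card_le_card_of_pairwiseDisjoint_of_inter_nonempty {ι α : Type*} [DecidableEq α]
    {E : Finset ι} {t : ι → Finset α} {T : Finset α} (hdisj : (E : Set ι).PairwiseDisjoint t)
    (hmeet : ∀ e ∈ E, (t e ∩ T).Nonempty) : E.card ≤ T.card :=
  calc E.card ≤ (E.biUnion fun e => t e ∩ T).card :=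
        card_le_card_biUnion (hdisj.mono fun _ => inter_subset_left) hmeet
    _ ≤ T.card := card_le_card (biUnion_subset.2 fun _ _ => inter_subset_right)

theorem update_mem_insert_flipC (x : Fin n → Bool) (i : Fin n) (b : Bool) :
    Function.update x i b ∈ ({x, flipC x i} : Finset (Fin n → Bool)) := by
  by_cases hb : b = x i
  · simp [hb]
  · have hb' : b = !x i := by cases b <;> cases hx : x i <;> simp_all
    simp [flipC, hb']

theorem monoB.exists_ne_of_decEdge {f g : (Fin n → Bool) → Bool} (hg : monoB g)
    {x : Fin n → Bool} {i : Fin n} (h : decEdge f x i) :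
    ∃ b, f (Function.update x i b) ≠ g (Function.update x i b) := by
  by_contra! hfg
  have hle := hg _ _ (Function.update_mono (f := x) (i := i) (Bool.false_le true))
  rw [← hfg, ← hfg, h.1, h.2] at hle
  exact absurd hle (by decide)

theorem le_distMono {f : (Fin n → Bool) → Bool} {c : ℝ}
    (h : ∀ g, monoB g → c ≤ ((univ.filter fun x => f x ≠ g x).card : ℝ)) :
    c / 2 ^ n ≤ distMono f := by
  refine le_csInf ⟨_, fun _ => true, fun _ _ _ => le_rfl, rfl⟩ ?_
  rintro d ⟨g, hg, rfl⟩
  gcongr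
  exact h g hg

/-- Edges are encoded as pairs `(x, i)`, the edge being `{x, x^{(i)}}` along dimension `i`. -/
theorem stmt1 (n : ℕ) (f : (Fin n → Bool) → Bool)
    (E : Finset ((Fin n → Bool) × Fin n))
    (hdec : ∀ e ∈ E, decEdge f e.1 e.2)
    (hmatch : ∀ e ∈ E, ∀ e' ∈ E, e ≠ e' →
      ({e.1, flipC e.1 e.2} : Finset (Fin n → Bool)) ∩ {e'.1, flipC e'.1 e'.2} = ∅) :
    (∀ g : (Fin n → Bool) → Bool, monoB g →
      (E.card : ℝ) ≤ ((univ.filter fun x => f x ≠ g x).card : ℝ)) ∧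
    (E.card : ℝ) / 2 ^ n ≤ distMono f := by
  have hdisj : (E : Set _).PairwiseDisjoint fun e : (Fin n → Bool) × Fin n =>
      ({e.1, flipC e.1 e.2} : Finset _) :=
    fun e he e' he' hne => disjoint_iff_inter_eq_empty.2 (hmatch e he e' he' hne)
  have hcard : ∀ g : (Fin n → Bool) → Bool, monoB g →
      (E.card : ℝ) ≤ ((univ.filter fun x => f x ≠ g x).card : ℝ) := by
    intro g hg
    have hmeet : ∀ e ∈ E, (({e.1, flipC e.1 e.2} : Finset _) ∩
        univ.filter fun x => f x ≠ g x).Nonempty := by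
      intro e he
      obtain ⟨b, hb⟩ := hg.exists_ne_of_decEdge (hdec e he)
      exact ⟨_, mem_inter.2 ⟨update_mem_insert_flipC e.1 e.2 b, by simpa using hb⟩⟩
    exact_mod_cast card_le_card_of_pairwiseDisjoint_of_inter_nonempty hdisj hmeet
  exact ⟨hcard, le_distMono hcard⟩
end

section
/- For every function f : {0,1}^n → {0,1} and every subset S ⊆ [n], the probability over a uniformly random x ∈ {0,1}^n that Capture(x, S, f) = 1 is at most 2·dist(f, Mono). -/
open Finset

attribute [local instance] Classical.propDecidable

variable {n : ℕ}

-- helper lemmas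
lemma flipC_flipC (x : Fin n → Bool) (i : Fin n) : flipC (flipC x i) i = x := by
  funext j
  by_cases h : j = i
  · subst h; simp [flipC]
  · simp [flipC, Function.update_of_ne h]

lemma flipC_ne (x : Fin n → Bool) (i : Fin n) : flipC x i ≠ x := by
  intro h
  have := congrFun h i
  simp [flipC] at this

lemma decEdge_flipC (f : (Fin n → Bool) → Bool) (x : Fin n → Bool) (i : Fin n) :
    decEdge f (flipC x i) i ↔ decEdge f x i := by
  simp [decEdge, flipC, Function.update_idem]

lemma update_le_update (x : Fin n → Bool) (i : Fin n) :
    ∀ j, Function.update x i false j ≤ Function.update x i true j := by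
  intro j
  by_cases h : j = i
  · subst h; simp
  · simp [Function.update_of_ne h]

lemma mismatch (f g : (Fin n → Bool) → Bool) (hg : monoB g) (x : Fin n → Bool)
    (i : Fin n) (hd : decEdge f x i) (hx : f x = g x) :
    f (flipC x i) ≠ g (flipC x i) := by
  obtain ⟨h0, h1⟩ := hd
  have hle := hg _ _ (update_le_update x i)
  cases hxi : x i with
  | false =>
    have ex : Function.update x i false = x := by
      funext j
      by_cases h : j = i
      · subst h; simp [hxi]
      · simp [Function.update_of_ne h]
    have ef : flipC x i = Function.update x i true := by
      simp [flipC, hxi]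
    rw [ef]
    rw [ex] at h0 hle
    rw [h1]
    rw [h0] at hx
    rw [← hx] at hle
    cases hgt : g (Function.update x i true)
    · rw [hgt] at hle; exact absurd hle (by decide)
    · simp
  | true =>
    have ex : Function.update x i true = x := by
      funext j
      by_cases h : j = i
      · subst h; simp [hxi]
      · simp [Function.update_of_ne h]
    have ef : flipC x i = Function.update x i false := by
      simp [flipC, hxi]
    rw [ef]
    rw [ex] at h1 hle
    rw [h0]
    rw [h1] at hx
    rw [← hx] at hle
    cases hgt : g (Function.update x i false)
    · simp
    · rw [hgt] at hle; exact absurd hle (by decide)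

lemma count_le (f g : (Fin n → Bool) → Bool) (S : Finset (Fin n)) (hg : monoB g) :
    (univ.filter fun x => Capture f S x).card ≤
      2 * (univ.filter fun x => f x ≠ g x).card := by
  classical
  set T := univ.filter fun x => Capture f S x with hT
  set D := univ.filter fun x => f x ≠ g x with hD
  have hwit : ∀ x, Capture f S x → Fin n := fun x h => h.choose
  set φ : (Fin n → Bool) → (Fin n → Bool) := fun x =>
    if h : Capture f S x then (if f x = g x then flipC x h.choose else x) else x with hφ
  -- properties of the witness
  have hwS : ∀ x (h : Capture f S x), h.choose ∈ S := fun x h => h.choose_spec.1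
  have hwd : ∀ x (h : Capture f S x), decEdge f x h.choose := fun x h => h.choose_spec.2.1
  have hwc : ∀ x (h : Capture f S x), ∀ j ∈ S \ {h.choose},
      ¬ decEdge f (flipC x h.choose) j := fun x h => h.choose_spec.2.2
  have hmaps : ∀ x ∈ T, φ x ∈ D := by
    intro x hx
    rw [hT, mem_filter] at hx
    obtain ⟨-, hcap⟩ := hx
    rw [hD, mem_filter]
    refine ⟨mem_univ _, ?_⟩
    rw [hφ]
    simp only [dif_pos hcap]
    by_cases hfg : f x = g x
    · rw [if_pos hfg]
      exact mismatch f g hg x hcap.choose (hwd x hcap) hfg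
    · rw [if_neg hfg]; exact hfg
  -- key: any x in the fiber of z with x ≠ z is determined
  have hkey : ∀ z x, x ∈ T → φ x = z → x ≠ z →
      ∃ i ∈ S, x = flipC z i ∧ decEdge f z i ∧ ∀ j ∈ S \ {i}, ¬ decEdge f z j := by
    intro z x hx hφx hne
    rw [hT, mem_filter] at hx
    obtain ⟨-, hcap⟩ := hx
    rw [hφ] at hφx
    simp only [dif_pos hcap] at hφx
    by_cases hfg : f x = g x
    · rw [if_pos hfg] at hφx
      set i := hcap.choose with hi
      refine ⟨i, hwS x hcap, ?_, ?_, ?_⟩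
      · rw [← hφx, flipC_flipC]
      · rw [← hφx, decEdge_flipC]; exact hwd x hcap
      · intro j hj
        have := hwc x hcap j hj
        rwa [hφx] at this
    · rw [if_neg hfg] at hφx
      exact absurd hφx hne
  have hfib : ∀ z ∈ D, (T.filter fun x => φ x = z).card ≤ 2 := by
    intro z _
    by_cases hex : ∃ x ∈ T.filter (fun x => φ x = z), x ≠ z
    · obtain ⟨b, hb, hbz⟩ := hex
      have hsub : T.filter (fun x => φ x = z) ⊆ {z, b} := by
        intro x hx
        by_cases hxz : x = z
        · simp [hxz]
        · rw [mem_filter] at hx hb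
          obtain ⟨i, hiS, hxe, hdz, hcond⟩ := hkey z x hx.1 hx.2 hxz
          obtain ⟨i', hi'S, hbe, hdz', -⟩ := hkey z b hb.1 hb.2 hbz
          have hii : i = i' := by
            by_contra hii
            exact hcond i' (mem_sdiff.2 ⟨hi'S, by simp [Ne.symm hii]⟩) hdz'
          simp [hxe, hbe, hii]
      calc (T.filter fun x => φ x = z).card ≤ ({z, b} : Finset _).card :=
            card_le_card hsub
        _ ≤ 2 := card_insert_le _ _ |>.trans (by simp)
    · push_neg at hex
      have hsub : T.filter (fun x => φ x = z) ⊆ {z} := by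
        intro x hx
        simp [hex x hx]
      calc (T.filter fun x => φ x = z).card ≤ ({z} : Finset _).card :=
            card_le_card hsub
        _ ≤ 2 := by simp
  exact card_le_mul_card_image_of_maps_to hmaps 2 hfib


/-- for every `f` and `S ⊆ [n]`,
`Pr_x[Capture(x,S,f) = 1] ≤ 2·dist(f, Mono)`. -/
theorem stmt2 (n : ℕ) (f : (Fin n → Bool) → Bool) (S : Finset (Fin n)) :
    ((univ.filter fun x => Capture f S x).card : ℝ) / 2 ^ n ≤ 2 * distMono f := by
  have h2n : (0:ℝ) < 2 ^ n := by positivity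
  have hne : {d : ℝ | ∃ g : (Fin n → Bool) → Bool, monoB g ∧
      d = ((univ.filter fun x => f x ≠ g x).card : ℝ) / 2 ^ n}.Nonempty := by
    refine ⟨_, fun _ => true, ?_, rfl⟩
    intro x y _
    exact le_refl _
  have hlb : ∀ d ∈ {d : ℝ | ∃ g : (Fin n → Bool) → Bool, monoB g ∧
      d = ((univ.filter fun x => f x ≠ g x).card : ℝ) / 2 ^ n},
      ((univ.filter fun x => Capture f S x).card : ℝ) / 2 ^ n / 2 ≤ d := by
    rintro d ⟨g, hg, rfl⟩
    have hcast : ((univ.filter fun x => Capture f S x).card : ℝ) ≤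
        2 * ((univ.filter fun x => f x ≠ g x).card : ℝ) := by
      exact_mod_cast count_le f g S hg
    rw [div_div, div_le_div_iff₀ (by positivity) h2n]
    nlinarith
  have hsinf := le_csInf hne hlb
  rw [distMono]
  linarith
end

section
/- Let f : {0,1}^n → {0,1}, let d ≥ 2 and s ≥ 1 be integers, and let x ∈ {0,1}^n satisfy |viol_f(x)| < 2d. Suppose there are at least s dimensions i ∈ viol_f(x) such that I_f⁻(x) ≥ I_f⁻(x^{(i)}). Then the probability over S ~ S(1/d) that Capture(x, S, f) = 1 is at least (s/d)·(1 − 1/d)^{4d}. -/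
open Finset

attribute [local instance] Classical.propDecidable

variable {n : ℕ}

private lemma binom_sum_aux (u : Finset (Fin n)) (p q : ℝ) :
    ∑ R ∈ u.powerset, p ^ R.card * q ^ (u.card - R.card) = (p + q) ^ u.card := by
  classical
  have h := Finset.prod_add (fun _ : Fin n => p) (fun _ : Fin n => q) u
  simp only [Finset.prod_const] at h
  calc ∑ R ∈ u.powerset, p ^ R.card * q ^ (u.card - R.card)
      = ∑ R ∈ u.powerset, p ^ R.card * q ^ (u \ R).card := by
        refine Finset.sum_congr rfl fun R hR => ?_
        rw [Finset.card_sdiff_of_subset (Finset.mem_powerset.mp hR)]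
    _ = (p + q) ^ u.card := h.symm

private lemma capture_single (p : ℝ) (i : Fin n) (T : Finset (Fin n)) (hiT : i ∉ T) :
    ∑ S : Finset (Fin n), p ^ S.card * (1 - p) ^ (n - S.card) *
      (if i ∈ S ∧ Disjoint S T then 1 else 0) = p * (1 - p) ^ T.card := by
  classical
  set q : ℝ := 1 - p with hq
  set U : Finset (Fin n) := (univ.erase i) \ T with hU
  have hTsub : T ⊆ univ.erase i := fun j hj =>
    Finset.mem_erase.mpr ⟨fun h => hiT (h ▸ hj), Finset.mem_univ j⟩
  have hTn : T.card ≤ n - 1 := by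
    have := Finset.card_le_card hTsub
    simpa [Finset.card_erase_of_mem, Finset.card_univ] using this
  have hn : 0 < n := i.pos
  have hUcard : U.card = n - 1 - T.card := by
    rw [hU, Finset.card_sdiff_of_subset hTsub, Finset.card_erase_of_mem (Finset.mem_univ i),
      Finset.card_univ, Fintype.card_fin]
  have hiU : i ∉ U := by simp [hU]
  have h1 : (∑ S : Finset (Fin n), p ^ S.card * (1 - p) ^ (n - S.card) *
      (if i ∈ S ∧ Disjoint S T then 1 else 0))
      = ∑ S ∈ (univ : Finset (Finset (Fin n))).filter
          (fun S => i ∈ S ∧ Disjoint S T), p ^ S.card * q ^ (n - S.card) := by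
    rw [Finset.sum_filter]
    refine Finset.sum_congr rfl fun S _ => ?_
    by_cases h : i ∈ S ∧ Disjoint S T <;> simp [h, hq]
  rw [h1]
  have h2 : (∑ S ∈ (univ : Finset (Finset (Fin n))).filter
        (fun S => i ∈ S ∧ Disjoint S T), p ^ S.card * q ^ (n - S.card))
      = ∑ R ∈ U.powerset, p ^ (R.card + 1) * q ^ (n - (R.card + 1)) := by
    refine Finset.sum_bij' (fun S _ => S.erase i) (fun R _ => insert i R) ?_ ?_ ?_ ?_ ?_
    · intro S hS
      simp only [Finset.mem_filter, Finset.mem_univ, true_and] at hS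
      refine Finset.mem_powerset.mpr fun j hj => ?_
      rw [Finset.mem_erase] at hj
      refine Finset.mem_sdiff.mpr ⟨Finset.mem_erase.mpr ⟨hj.1, Finset.mem_univ j⟩, ?_⟩
      exact fun hjT => (Finset.disjoint_left.mp hS.2) hj.2 hjT
    · intro R hR
      rw [Finset.mem_powerset] at hR
      simp only [Finset.mem_filter, Finset.mem_univ, true_and]
      refine ⟨Finset.mem_insert_self i R, ?_⟩
      rw [Finset.disjoint_left]
      intro j hj hjT
      rcases Finset.mem_insert.mp hj with h | h
      · exact hiT (h ▸ hjT)
      · exact (Finset.mem_sdiff.mp (hR h)).2 hjT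
    · intro S hS
      simp only [Finset.mem_filter, Finset.mem_univ, true_and] at hS
      exact Finset.insert_erase hS.1
    · intro R hR
      rw [Finset.mem_powerset] at hR
      exact Finset.erase_insert (fun h => hiU (hR h))
    · intro S hS
      simp only [Finset.mem_filter, Finset.mem_univ, true_and] at hS
      rw [Finset.card_erase_of_mem hS.1]
      have hSn : 1 ≤ S.card := Finset.card_pos.mpr ⟨i, hS.1⟩
      congr 2 <;> omega
  rw [h2]
  have h3 : ∀ R ∈ U.powerset, p ^ (R.card + 1) * q ^ (n - (R.card + 1))
      = (p * q ^ T.card) * (p ^ R.card * q ^ (U.card - R.card)) := by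
    intro R hR
    have hRU : R.card ≤ U.card := Finset.card_le_card (Finset.mem_powerset.mp hR)
    have hexp : n - (R.card + 1) = T.card + (U.card - R.card) := by omega
    rw [hexp, pow_succ, pow_add]
    ring
  rw [Finset.sum_congr rfl h3, ← Finset.mul_sum, binom_sum_aux]
  have : p + q = 1 := by rw [hq]; ring
  rw [this, one_pow, mul_one]

/-- if `|viol_f(x)| < 2d` and at least `s` dimensions
`i ∈ viol_f(x)` satisfy `I_f⁻(x) ≥ I_f⁻(x^{(i)})`, then
`Pr_{S ~ S(1/d)}[Capture(x,S,f) = 1] ≥ (s/d)·(1 − 1/d)^{4d}`. -/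
theorem stmt3 (n : ℕ) (f : (Fin n → Bool) → Bool) (d s : ℕ) (hd : 2 ≤ d) (hs : 1 ≤ s)
    (x : Fin n → Bool)
    (hviol : Iminus f x < 2 * d)
    (hgood : s ≤ (univ.filter fun i =>
      decEdge f x i ∧ Iminus f (flipC x i) ≤ Iminus f x).card) :
    ((s : ℝ) / d) * (1 - 1 / (d : ℝ)) ^ (4 * d) ≤
      ∑ S : Finset (Fin n), (1 / (d : ℝ)) ^ S.card * (1 - 1 / (d : ℝ)) ^ (n - S.card) *
        (if Capture f S x then 1 else 0) := by
  classical
  have hn0 : (0:ℝ) < d := by positivity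
  set p : ℝ := 1 / (d : ℝ) with hp
  set q : ℝ := 1 - p with hq
  have hp0 : 0 ≤ p := by positivity
  have hp1 : p ≤ 1 := by
    rw [hp, div_le_one hn0]
    exact_mod_cast Nat.one_le_of_lt hd
  have hq0 : 0 ≤ q := by rw [hq]; linarith
  have hq1 : q ≤ 1 := by rw [hq]; linarith
  set G : Finset (Fin n) := univ.filter fun i =>
    decEdge f x i ∧ Iminus f (flipC x i) ≤ Iminus f x with hG
  set T : Fin n → Finset (Fin n) := fun i =>
    ((univ.filter fun j => decEdge f x j) ∪
      (univ.filter fun j => decEdge f (flipC x i) j)).erase i with hT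
  have hiT : ∀ i, i ∉ T i := fun i => Finset.notMem_erase i _
  have hTcard : ∀ i ∈ G, (T i).card ≤ 4 * d := by
    intro i hi
    simp only [hG, Finset.mem_filter] at hi
    have h1 : (T i).card ≤ ((univ.filter fun j => decEdge f x j) ∪
        (univ.filter fun j => decEdge f (flipC x i) j)).card :=
      Finset.card_le_card (Finset.erase_subset _ _)
    have h2 := Finset.card_union_le (univ.filter fun j => decEdge f x j)
      (univ.filter fun j => decEdge f (flipC x i) j)
    have h3 : Iminus f (flipC x i) ≤ Iminus f x := hi.2.2
    simp only [Iminus] at h3 hviol ⊢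
    omega
  -- the captured events imply Capture and are pairwise disjoint
  have hstep : ∀ S : Finset (Fin n),
      (∑ i ∈ G, (if i ∈ S ∧ Disjoint S (T i) then (1:ℝ) else 0)) ≤
        (if Capture f S x then 1 else 0) := by
    intro S
    have himp : ∀ i ∈ G, (i ∈ S ∧ Disjoint S (T i)) → Capture f S x := by
      intro i hi hev
      simp only [hG, Finset.mem_filter] at hi
      refine ⟨i, hev.1, hi.2.1, fun j hj hdec => ?_⟩
      rw [Finset.mem_sdiff, Finset.mem_singleton] at hj
      have hjT : j ∈ T i := by
        rw [hT]
        refine Finset.mem_erase.mpr ⟨hj.2, Finset.mem_union_right _ ?_⟩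
        exact Finset.mem_filter.mpr ⟨Finset.mem_univ j, hdec⟩
      exact (Finset.disjoint_left.mp hev.2) hj.1 hjT
    by_cases hC : Capture f S x
    · simp only [hC, if_true]
      rw [Finset.sum_boole]
      have hle : (G.filter fun i => i ∈ S ∧ Disjoint S (T i)).card ≤ 1 := by
        rw [Finset.card_le_one]
        intro a ha b hb
        simp only [Finset.mem_filter] at ha hb
        by_contra hab
        have hbG : decEdge f x b := by
          have hb1 := hb.1
          rw [hG, Finset.mem_filter] at hb1
          exact hb1.2.1
        have hbTa : b ∈ T a := by
          rw [hT]
          refine Finset.mem_erase.mpr ⟨fun h => hab ?_, Finset.mem_union_left _ ?_⟩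
          · exact (h ▸ rfl)
          · exact Finset.mem_filter.mpr ⟨Finset.mem_univ b, hbG⟩
        exact (Finset.disjoint_left.mp ha.2.2) hb.2.1 hbTa
      exact_mod_cast hle
    · simp only [hC, if_false]
      refine le_of_eq (Finset.sum_eq_zero fun i hi => ?_)
      by_cases hev : i ∈ S ∧ Disjoint S (T i)
      · exact absurd (himp i hi hev) hC
      · simp [hev]
  -- main chain
  have key : ∀ i ∈ G,
      (∑ S : Finset (Fin n), p ^ S.card * q ^ (n - S.card) *
        (if i ∈ S ∧ Disjoint S (T i) then 1 else 0)) = p * q ^ (T i).card :=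
    fun i _ => capture_single p i (T i) (hiT i)
  have hw0 : ∀ S : Finset (Fin n), (0:ℝ) ≤ p ^ S.card * q ^ (n - S.card) := by
    intro S; positivity
  have hsG : (s : ℝ) ≤ G.card := by exact_mod_cast hgood
  calc ((s : ℝ) / d) * (1 - 1 / (d : ℝ)) ^ (4 * d)
      = (s : ℝ) * (p * q ^ (4 * d)) := by rw [hq, hp]; ring
    _ ≤ (G.card : ℝ) * (p * q ^ (4 * d)) := by
        refine mul_le_mul_of_nonneg_right hsG ?_
        positivity
    _ = ∑ i ∈ G, p * q ^ (4 * d) := by rw [Finset.sum_const, nsmul_eq_mul]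
    _ ≤ ∑ i ∈ G, p * q ^ (T i).card := by
        refine Finset.sum_le_sum fun i hi => ?_
        exact mul_le_mul_of_nonneg_left
          (pow_le_pow_of_le_one hq0 hq1 (hTcard i hi)) hp0
    _ = ∑ i ∈ G, ∑ S : Finset (Fin n), p ^ S.card * q ^ (n - S.card) *
          (if i ∈ S ∧ Disjoint S (T i) then 1 else 0) := by
        exact Finset.sum_congr rfl fun i hi => (key i hi).symm
    _ = ∑ S : Finset (Fin n), ∑ i ∈ G, p ^ S.card * q ^ (n - S.card) *
          (if i ∈ S ∧ Disjoint S (T i) then 1 else 0) := Finset.sum_comm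
    _ = ∑ S : Finset (Fin n), p ^ S.card * q ^ (n - S.card) *
          ∑ i ∈ G, (if i ∈ S ∧ Disjoint S (T i) then (1:ℝ) else 0) := by
        exact Finset.sum_congr rfl fun S _ => (Finset.mul_sum _ _ _).symm
    _ ≤ ∑ S : Finset (Fin n), p ^ S.card * q ^ (n - S.card) *
          (if Capture f S x then 1 else 0) := by
        refine Finset.sum_le_sum fun S _ => ?_
        exact mul_le_mul_of_nonneg_left (hstep S) (hw0 S)
    _ = ∑ S : Finset (Fin n), (1 / (d : ℝ)) ^ S.card * (1 - 1 / (d : ℝ)) ^ (n - S.card) *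
          (if Capture f S x then 1 else 0) := by rw [hp, hq]
end

section
/- For all integers m ≥ 1 and 0 ≤ t ≤ m, 2^t · C(2m − t, m) ≤ C(2m, m), where C(a, b) denotes the binomial coefficient. Equivalently, if n = 2m, T ⊆ [n] is a fixed set of size t ≤ n/2, and M is a uniformly random subset of [n] of size n/2, then Pr[T ∩ M = ∅] ≤ 2^{−t}. -/
open Finset

attribute [local instance] Classical.propDecidable

variable {n : ℕ}

lemma step_aux (m t : ℕ) (hm : 1 ≤ m) (ht : t < m) :
    2 * Nat.choose (2 * m - (t + 1)) m ≤ Nat.choose (2 * m - t) m := by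
  set N := 2 * m - (t + 1) with hN
  have h1 : 2 * m - t = N + 1 := by omega
  have hm1 : m = (m - 1) + 1 := by omega
  have hkey : Nat.choose N m ≤ Nat.choose N (m - 1) := by
    have h2 := Nat.choose_succ_right_eq N (m - 1)
    rw [← hm1] at h2
    have h3 : N - (m - 1) = m - t := by omega
    rw [h3] at h2
    have h4 : Nat.choose N m * m ≤ Nat.choose N (m - 1) * m := by
      rw [h2]; exact Nat.mul_le_mul_left _ (by omega)
    exact Nat.le_of_mul_le_mul_right h4 (by omega)
  rw [h1, hm1, Nat.choose_succ_succ]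
  simp only [Nat.succ_eq_add_one, ← hm1]
  omega

lemma main_ineq (m t : ℕ) (hm : 1 ≤ m) (ht : t ≤ m) :
    2 ^ t * Nat.choose (2 * m - t) m ≤ Nat.choose (2 * m) m := by
  induction t with
  | zero => simp
  | succ s ih =>
    have hs : s ≤ m := by omega
    calc 2 ^ (s + 1) * Nat.choose (2 * m - (s + 1)) m
        = 2 ^ s * (2 * Nat.choose (2 * m - (s + 1)) m) := by ring
      _ ≤ 2 ^ s * Nat.choose (2 * m - s) m :=
          Nat.mul_le_mul_left _ (step_aux m s hm (by omega))
      _ ≤ Nat.choose (2 * m) m := ih hs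

/-- `2^t · C(2m−t, m) ≤ C(2m, m)`; equivalently, for a fixed
`T ⊆ [n]` of size `t ≤ n/2 = m` and a uniformly random `M ⊆ [n]` of size `n/2`,
`Pr[T ∩ M = ∅] ≤ 2^{−t}`. -/
theorem stmt11 (m t : ℕ) (hm : 1 ≤ m) (ht : t ≤ m) :
    2 ^ t * Nat.choose (2 * m - t) m ≤ Nat.choose (2 * m) m ∧
    ∀ T : Finset (Fin (2 * m)), T.card = t →
      ((univ.filter fun M : Finset (Fin (2 * m)) => M.card = m ∧ T ∩ M = ∅).card : ℝ) /
        ((univ.filter fun M : Finset (Fin (2 * m)) => M.card = m).card : ℝ)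
      ≤ 1 / 2 ^ t := by
  have hmain := main_ineq m t hm ht
  refine ⟨hmain, fun T hT => ?_⟩
  have hdenom : (univ.filter fun M : Finset (Fin (2 * m)) => M.card = m)
      = powersetCard m (univ : Finset (Fin (2 * m))) := by
    ext M; simp [Finset.mem_powersetCard]
  have hnum : (univ.filter fun M : Finset (Fin (2 * m)) => M.card = m ∧ T ∩ M = ∅)
      = powersetCard m Tᶜ := by
    ext M
    simp only [Finset.mem_filter, Finset.mem_univ, true_and, Finset.mem_powersetCard]
    constructor
    · rintro ⟨hc, he⟩
      refine ⟨fun a ha => ?_, hc⟩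
      simp only [Finset.mem_compl]
      intro haT
      have : a ∈ T ∩ M := Finset.mem_inter.mpr ⟨haT, ha⟩
      simp [he] at this
    · rintro ⟨hsub, hc⟩
      refine ⟨hc, ?_⟩
      ext a
      simp only [Finset.mem_inter, Finset.notMem_empty, iff_false, not_and]
      intro haT haM
      have := hsub haM
      simp [Finset.mem_compl] at this
      exact this haT
  rw [hdenom, hnum, Finset.card_powersetCard, Finset.card_powersetCard]
  have hTc : Tᶜ.card = 2 * m - t := by
    rw [Finset.card_compl, hT]; simp
  rw [hTc, Finset.card_univ, Fintype.card_fin]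
  have hpos : 0 < Nat.choose (2 * m) m := Nat.choose_pos (by omega)
  rw [div_le_div_iff₀ (by exact_mod_cast hpos) (by positivity)]
  have hc : ((2:ℝ)) ^ t * (((2 * m - t).choose m : ℕ) : ℝ) ≤ (((2 * m).choose m : ℕ) : ℝ) := by
    exact_mod_cast hmain
  linarith [hc]
end

section
/- For every constant κ ∈ (0, 1/2) there exist c > 0 and n₀ such that the following holds for every multiple of 4, n ≥ n₀, every M ⊆ [n] with |M| = n/2, and every P ⊆ Ψ_M with |P| = |Ψ_M|/2: every completion F of the D⁻ instance determined by (M, P) satisfies dist(F, (n/2)-Junta) ≥ c/√n. -/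
/-!
Write `x = (z, w)` with `z = x_M` and `w = x_{M̄}`. For `z` in the middle layer `Ψ_M` and `w` in
the lower tail `|w| < n/4 - n^κ` the completion is forced to be `F = [z ∉ P]`, in the upper tail
`|w| > n/4 + n^κ` it is `F = [z ∈ P]`, and complementing `w` shows both tails have the same size
`L`. Let `g` be a junta on `J`, `|J| ≤ n/2`.
* If `J = M`, then `g(z, ·)` is constant while `F(z, ·)` differs between `w` and its complement,
  so `g` errs on one point of each such pair: `|Ψ_M| L` errors.
* Otherwise `g` ignores some `i ∈ M`. Pick the `|Ψ_M| L / 2` middle-layer points with `x_i = 0`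
  and `F = 0` (one tail or the other according to `z ∈ P`); setting `x_i = 1` lifts them to
  weight `n/4 + 1` where `F = 1`, without changing `g`, so again `g` errs on one point per pair.
Finally `|Ψ_M| = C(n/2, n/4) ≥ 2^{n/2}/√n`, and the band `||w| - n/4| ≤ n^κ` has at most
`(2n^κ + 3) C(n/2, n/4) = O(n^{κ - 1/2}) 2^{n/2}` points, so `L ≥ 2^{n/2}/4` for large `n` and
the distance is at least `1/(8√n)`.
-/

open Finset

attribute [local instance] Classical.propDecidable

variable {n : ℕ}

section BoolWeight

variable {α : Type*} [Fintype α]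

def boolWeight (z : α → Bool) : ℕ := #{i | z i = true}

lemma boolWeight_le_card (z : α → Bool) : boolWeight z ≤ Fintype.card α :=
  card_le_univ _

lemma boolWeight_not (z : α → Bool) :
    boolWeight (fun i => !z i) = Fintype.card α - boolWeight z := by
  rw [boolWeight, boolWeight, ← card_compl]
  congr 1
  ext i
  simp

lemma card_boolWeight_eq [DecidableEq α] (k : ℕ) :
    #{z : α → Bool | boolWeight z = k} = (Fintype.card α).choose k := by
  rw [← card_univ, ← card_powersetCard k (univ : Finset α)]
  refine card_nbij' (fun z => ({i | z i = true} : Finset α)) (fun s i => decide (i ∈ s))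
    ?_ ?_ ?_ ?_
  · intro z hz
    simp only [mem_coe, mem_filter, mem_univ, true_and, mem_powersetCard] at hz ⊢
    exact ⟨subset_univ _, hz⟩
  · intro s hs
    simp only [mem_coe, mem_filter, mem_univ, true_and, mem_powersetCard] at hs ⊢
    simpa [boolWeight] using hs.2
  · intro z _
    funext i
    simp
  · intro s _
    ext i
    simp

lemma card_boolWeight_lt_eq_card_lt_boolWeight [DecidableEq α] {a b : ℝ}
    (hab : a + b = Fintype.card α) :
    #{z : α → Bool | (boolWeight z : ℝ) < a} = #{z : α → Bool | b < boolWeight z} := by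
  have hcast (z : α → Bool) :
      (boolWeight (fun i => !z i) : ℝ) = Fintype.card α - boolWeight z := by
    rw [boolWeight_not, Nat.cast_sub (boolWeight_le_card z)]
  refine card_nbij' (fun z i => !z i) (fun z i => !z i) ?_ ?_ ?_ ?_ <;> intro z hz
  · simp only [coe_filter, Set.mem_ofPred_eq, mem_univ, true_and, hcast] at hz ⊢
    linarith
  · simp only [coe_filter, Set.mem_ofPred_eq, mem_univ, true_and, hcast] at hz ⊢
    linarith
  all_goals simp

lemma card_abs_boolWeight_sub_le [DecidableEq α] (c : ℕ) (s : ℝ) :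
    #{z : α → Bool | |(boolWeight z : ℝ) - c| ≤ s} ≤
      (2 * ⌈s⌉₊ + 1) * (Fintype.card α).choose (Fintype.card α / 2) := by
  set t := ⌈s⌉₊
  have hsub : ({z : α → Bool | |(boolWeight z : ℝ) - c| ≤ s} : Finset _) ⊆
      (Icc (c - t) (c + t)).biUnion fun k => {z | boolWeight z = k} := by
    intro z hz
    simp only [mem_filter, mem_univ, true_and, abs_le] at hz
    have hst : s ≤ t := Nat.le_ceil s
    simp only [mem_biUnion, mem_Icc, mem_filter, mem_univ, true_and, exists_eq_right']
    constructor
    · have : (c : ℝ) ≤ boolWeight z + t := by linarith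
      have : c ≤ boolWeight z + t := by exact_mod_cast this
      omega
    · have : (boolWeight z : ℝ) ≤ c + t := by linarith
      exact_mod_cast this
  calc _ ≤ _ := card_le_card hsub
    _ ≤ ∑ k ∈ Icc (c - t) (c + t), #{z : α → Bool | boolWeight z = k} := card_biUnion_le
    _ ≤ ∑ _k ∈ Icc (c - t) (c + t), (Fintype.card α).choose (Fintype.card α / 2) := by
      gcongr with k
      rw [card_boolWeight_eq]
      exact Nat.choose_le_middle k _
    _ ≤ _ := by
      rw [sum_const, smul_eq_mul, Nat.card_Icc]
      gcongr
      omega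

lemma two_mul_card_boolWeight_lt_add_card_abs_le [DecidableEq α] {c : ℕ}
    (hc : Fintype.card α = 2 * c) {s : ℝ} (hs : 0 ≤ s) :
    2 * #{z : α → Bool | (boolWeight z : ℝ) < c - s} +
      #{z : α → Bool | |(boolWeight z : ℝ) - c| ≤ s} = 2 ^ Fintype.card α := by
  set L : Finset (α → Bool) := {z | (boolWeight z : ℝ) < c - s}
  set H : Finset (α → Bool) := {z | (c : ℝ) + s < boolWeight z}
  set B : Finset (α → Bool) := {z | |(boolWeight z : ℝ) - c| ≤ s}
  have hLH : #L = #H := card_boolWeight_lt_eq_card_lt_boolWeight (by rw [hc]; push_cast; ring)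
  have hunion : L ∪ H ∪ B = univ := by
    ext z
    simp only [L, H, B, mem_union, mem_filter, mem_univ, true_and, iff_true, abs_le]
    by_contra! h
    exact absurd (h.2 (by linarith [h.1.1])) (by linarith [h.1.2])
  rw [two_mul]
  nth_rewrite 2 [hLH]
  rw [← card_union_of_disjoint, ← card_union_of_disjoint, hunion, card_univ,
    Fintype.card_fun, Fintype.card_bool]
  · rw [disjoint_union_left]
    constructor <;> refine disjoint_filter.2 fun z _ h₁ h₂ => ?_ <;> rw [abs_le] at h₂ <;>
      linarith [h₂.1, h₂.2]
  · exact disjoint_filter.2 fun z _ h₁ h₂ => by linarith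

lemma two_mul_card_boolWeight_eq_and_eq_false [DecidableEq α] {k : ℕ}
    (hk : Fintype.card α = 2 * k) (i : α) :
    2 * #{z : α → Bool | boolWeight z = k ∧ z i = false} =
      #{z : α → Bool | boolWeight z = k} := by
  have hsymm : #{z : α → Bool | boolWeight z = k ∧ z i = false} =
      #{z : α → Bool | boolWeight z = k ∧ ¬ z i = false} := by
    refine card_nbij' (fun z j => !z j) (fun z j => !z j) ?_ ?_ ?_ ?_ <;>
      intro z hz <;>
      simp only [mem_coe, mem_filter, mem_univ, true_and, boolWeight_not, Bool.not_eq_false,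
        Bool.not_not] at hz ⊢ <;>
      exact ⟨by omega, by simp [hz.2]⟩
  rw [two_mul]
  nth_rewrite 2 [hsymm]
  rw [← filter_filter, ← filter_filter, card_filter_add_card_filter_not]

end BoolWeight

namespace Nat

/- Both bounds are squared so that the inductions stay in `ℕ`; the `3 * m + 1` (rather than `m`)
is what makes the upper bound inductive. -/

lemma sixteen_pow_le_four_mul_mul_centralBinom_sq {m : ℕ} (hm : 1 ≤ m) :
    16 ^ m ≤ 4 * m * centralBinom m ^ 2 := by
  induction m, hm using Nat.le_induction with
  | base => simp [centralBinom, choose]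
  | succ k hk ih =>
    have hrec := succ_mul_centralBinom_succ k
    suffices (k + 1) * 16 ^ (k + 1) ≤ (k + 1) * (4 * (k + 1) * centralBinom (k + 1) ^ 2) from
      le_of_mul_le_mul_left this k.succ_pos
    calc (k + 1) * 16 ^ (k + 1) = 16 * (k + 1) * 16 ^ k := by ring
      _ ≤ 16 * (k + 1) * (4 * k * centralBinom k ^ 2) := by gcongr
      _ = 16 * (4 * k * (k + 1)) * centralBinom k ^ 2 := by ring
      _ ≤ 16 * (2 * k + 1) ^ 2 * centralBinom k ^ 2 := by gcongr; nlinarith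
      _ = 4 * ((k + 1) * centralBinom (k + 1)) ^ 2 := by rw [hrec]; ring
      _ = (k + 1) * (4 * (k + 1) * centralBinom (k + 1) ^ 2) := by ring

lemma centralBinom_sq_mul_le_sixteen_pow (m : ℕ) :
    centralBinom m ^ 2 * (3 * m + 1) ≤ 16 ^ m := by
  induction m with
  | zero => simp
  | succ k ih =>
    have hrec := succ_mul_centralBinom_succ k
    suffices (k + 1) ^ 2 * (centralBinom (k + 1) ^ 2 * (3 * (k + 1) + 1)) ≤
        (k + 1) ^ 2 * 16 ^ (k + 1) from le_of_mul_le_mul_left this (by positivity)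
    calc (k + 1) ^ 2 * (centralBinom (k + 1) ^ 2 * (3 * (k + 1) + 1))
        = ((k + 1) * centralBinom (k + 1)) ^ 2 * (3 * k + 4) := by ring
      _ = 4 * (2 * k + 1) ^ 2 * (3 * k + 4) * centralBinom k ^ 2 := by rw [hrec]; ring
      _ ≤ 16 * (k + 1) ^ 2 * (3 * k + 1) * centralBinom k ^ 2 :=
          Nat.mul_le_mul_right _ (by nlinarith)
      _ = 16 * (k + 1) ^ 2 * (centralBinom k ^ 2 * (3 * k + 1)) := by ring
      _ ≤ 16 * (k + 1) ^ 2 * 16 ^ k := by gcongr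
      _ = (k + 1) ^ 2 * 16 ^ (k + 1) := by ring

lemma choose_half_quarter_eq_centralBinom {n : ℕ} (hn : 4 ∣ n) :
    (n / 2).choose (n / 4) = (n / 4).centralBinom := by
  obtain ⟨m, rfl⟩ := hn
  rw [centralBinom_eq_two_mul_choose]
  congr 1
  omega

end Nat

lemma sq_sqrt_mul_choose (n : ℕ) :
    (√n * (n / 2).choose (n / 4) : ℝ) ^ 2 = n * ((n / 2).choose (n / 4) : ℝ) ^ 2 := by
  rw [mul_pow, Real.sq_sqrt n.cast_nonneg]

lemma two_pow_half_le_sqrt_mul_choose (hn : 4 ∣ n) (hn0 : n ≠ 0) :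
    (2 : ℝ) ^ (n / 2) ≤ √n * (n / 2).choose (n / 4) := by
  obtain ⟨m, rfl⟩ := hn
  have key := Nat.sixteen_pow_le_four_mul_mul_centralBinom_sq (m := m) (by omega)
  rw [← pow_le_pow_iff_left₀ (by positivity) (by positivity) two_ne_zero, sq_sqrt_mul_choose,
    Nat.choose_half_quarter_eq_centralBinom (dvd_mul_right 4 m), ← pow_mul,
    show 4 * m / 2 * 2 = 4 * m by omega, show 4 * m / 4 = m by omega, pow_mul]
  exact_mod_cast key

lemma sqrt_mul_choose_le_two_mul_two_pow_half (hn : 4 ∣ n) :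
    √n * (n / 2).choose (n / 4) ≤ 2 * (2 : ℝ) ^ (n / 2) := by
  obtain ⟨m, rfl⟩ := hn
  have key : ((m.centralBinom ^ 2 * m : ℕ) : ℝ) ≤ 16 ^ m := by
    exact_mod_cast (Nat.mul_le_mul_left _ (by omega)).trans
      (Nat.centralBinom_sq_mul_le_sixteen_pow m)
  rw [← pow_le_pow_iff_left₀ (by positivity) (by positivity) two_ne_zero, sq_sqrt_mul_choose,
    Nat.choose_half_quarter_eq_centralBinom (dvd_mul_right 4 m), mul_pow, ← pow_mul,
    show 4 * m / 2 * 2 = 4 * m by omega, show 4 * m / 4 = m by omega, pow_mul]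
  push_cast at key
  norm_num
  linarith

section Split

variable {ι β : Type*} [Fintype ι] [DecidableEq ι]

def splitEquiv (M : Finset ι) : (ι → β) ≃ (↥M → β) × (↥Mᶜ → β) where
  toFun x := (fun i => x i, fun i => x i)
  invFun p i := if h : i ∈ M then p.1 ⟨i, h⟩ else p.2 ⟨i, mem_compl.2 h⟩
  left_inv x := by
    funext i
    by_cases h : i ∈ M <;> simp [h]
  right_inv p := by
    ext i
    · simp [i.2]
    · simp [mem_compl.1 i.2]

@[simp]
lemma splitEquiv_apply_fst (M : Finset ι) (x : ι → β) :
    (splitEquiv M x).1 = fun i : ↥M => x i := rfl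

@[simp]
lemma splitEquiv_apply_snd (M : Finset ι) (x : ι → β) :
    (splitEquiv M x).2 = fun i : ↥Mᶜ => x i := rfl

lemma card_filter_splitEquiv_mem [Fintype β] (M : Finset ι)
    (A : Finset (↥M → β)) (B : Finset (↥Mᶜ → β))
    [DecidablePred fun x : ι → β => (splitEquiv M x).1 ∈ A ∧ (splitEquiv M x).2 ∈ B] :
    #{x : ι → β | (splitEquiv M x).1 ∈ A ∧ (splitEquiv M x).2 ∈ B} = #A * #B := by
  rw [← card_product]
  exact card_equiv (splitEquiv M) fun x => by
    simp only [mem_filter, mem_univ, true_and, mem_product]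

end Split

lemma card_le_card_filter_ne_of_pairing {X β : Type*} [Fintype X] [DecidableEq β]
    {F g : X → β} {T : Finset X} {σ : X → X} (hσ : Set.InjOn σ T) (hσT : ∀ x ∈ T, σ x ∉ T)
    (hF : ∀ x ∈ T, F (σ x) ≠ F x) (hg : ∀ x ∈ T, g (σ x) = g x) :
    #T ≤ #{x | F x ≠ g x} := by
  refine card_le_card_of_injOn (fun x => if F x ≠ g x then x else σ x) ?_ ?_
  · intro x hx
    by_cases h : F x ≠ g x
    · simp [h]
    · rw [not_not] at h
      simpa [h, hg x hx] using hF x hx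
  · intro x hx y hy hxy
    dsimp only at hxy
    by_cases h₁ : F x ≠ g x <;> by_cases h₂ : F y ≠ g y
    · simpa [h₁, h₂] using hxy
    · rw [if_pos h₁, if_neg h₂] at hxy
      exact absurd (hxy ▸ hx) (hσT y hy)
    · rw [if_neg h₁, if_pos h₂] at hxy
      exact absurd (hxy ▸ hy) (hσT x hx)
    · rw [if_neg h₁, if_neg h₂] at hxy
      exact hσ hx hy hxy

lemma wt_eq_boolWeight (S : Finset (Fin n)) (x : Fin n → Bool) :
    wt S x = boolWeight (fun i : ↥S => x i) := by
  rw [wt, boolWeight, univ_eq_attach, filter_attach (fun i => x i = true), card_map, card_attach]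

lemma wt_update_true {M : Finset (Fin n)} {x : Fin n → Bool} {i : Fin n} (hi : i ∈ M)
    (hx : x i = false) : wt M (Function.update x i true) = wt M x + 1 := by
  have : M.filter (fun j => Function.update x i true j = true) =
      insert i (M.filter fun j => x j = true) := by
    ext j
    by_cases hj : j = i <;> simp [hj, hi, Function.update_apply]
  rw [wt, wt, this, card_insert_of_notMem (by simp [hx])]

lemma mem_PsiSet {M : Finset (Fin n)} {z : ↥M → Bool} :
    z ∈ PsiSet M ↔ boolWeight z = n / 4 := by
  simp only [PsiSet, boolWeight, mem_filter, mem_univ, true_and]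

lemma card_PsiSet {M : Finset (Fin n)} (hM : #M = n / 2) :
    #(PsiSet M) = (n / 2).choose (n / 4) := by
  have := card_boolWeight_eq (α := ↥M) (n / 4)
  rwa [Fintype.card_coe, hM] at this

lemma card_compl_coe_eq {M : Finset (Fin n)} (hM : #M = n / 2) (hn : 4 ∣ n) :
    Fintype.card ↥Mᶜ = 2 * (n / 4) := by
  rw [Fintype.card_coe, card_compl, hM, Fintype.card_fin]
  omega

noncomputable def lowSet (κ : ℝ) (M : Finset (Fin n)) : Finset (↥Mᶜ → Bool) :=
  {w | (boolWeight w : ℝ) < (n / 4 : ℕ) - (n : ℝ) ^ κ}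

noncomputable def highSet (κ : ℝ) (M : Finset (Fin n)) : Finset (↥Mᶜ → Bool) :=
  {w | ((n / 4 : ℕ) : ℝ) + (n : ℝ) ^ κ < boolWeight w}

lemma card_highSet {κ : ℝ} {M : Finset (Fin n)} (hM : #M = n / 2) (hn : 4 ∣ n) :
    #(highSet κ M) = #(lowSet κ M) :=
  (card_boolWeight_lt_eq_card_lt_boolWeight (α := ↥Mᶜ) (a := (n / 4 : ℕ) - (n : ℝ) ^ κ)
    (by rw [card_compl_coe_eq hM hn]; push_cast; ring)).symm

lemma disjoint_lowSet_highSet (κ : ℝ) (M : Finset (Fin n)) :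
    Disjoint (lowSet κ M) (highSet κ M) :=
  disjoint_filter.2 fun _ _ h₁ h₂ => by linarith [Real.rpow_nonneg n.cast_nonneg κ]

lemma compl_mem_highSet_of_mem_lowSet {κ : ℝ} {M : Finset (Fin n)} (hM : #M = n / 2)
    (hn : 4 ∣ n) {w : ↥Mᶜ → Bool} (hw : w ∈ lowSet κ M) : (fun i => !w i) ∈ highSet κ M := by
  simp only [lowSet, highSet, mem_filter, mem_univ, true_and, boolWeight_not,
    card_compl_coe_eq hM hn] at hw ⊢
  rw [Nat.cast_sub (card_compl_coe_eq hM hn ▸ boolWeight_le_card w)]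
  push_cast
  linarith [Real.rpow_nonneg n.cast_nonneg κ]

lemma two_pow_half_le_four_mul_card_lowSet {κ : ℝ} {M : Finset (Fin n)} (hM : #M = n / 2)
    (hn : 4 ∣ n) (hκn : 2 * ⌈(n : ℝ) ^ κ⌉₊ + 1 ≤ √n / 4) :
    (2 : ℝ) ^ (n / 2) ≤ 4 * #(lowSet κ M) := by
  set B : Finset (↥Mᶜ → Bool) := {w | |(boolWeight w : ℝ) - (n / 4 : ℕ)| ≤ (n : ℝ) ^ κ}
  have hcard := card_compl_coe_eq hM hn
  have hpartition : 2 * #(lowSet κ M) + #B = 2 ^ (n / 2) := by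
    have := two_mul_card_boolWeight_lt_add_card_abs_le hcard (Real.rpow_nonneg n.cast_nonneg κ)
    rwa [hcard, show 2 * (n / 4) = n / 2 by omega] at this
  have hB : #B ≤ (2 * ⌈(n : ℝ) ^ κ⌉₊ + 1) * (n / 2).choose (n / 4) := by
    have := card_abs_boolWeight_sub_le (α := ↥Mᶜ) (n / 4) ((n : ℝ) ^ κ)
    rwa [hcard, show 2 * (n / 4) = n / 2 by omega, show n / 2 / 2 = n / 4 by omega] at this
  have hpartition' : 2 * (#(lowSet κ M) : ℝ) + #B = 2 ^ (n / 2) := by exact_mod_cast hpartition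
  have hB' : (#B : ℝ) ≤ (2 * ⌈(n : ℝ) ^ κ⌉₊ + 1) * (n / 2).choose (n / 4) := by
    exact_mod_cast hB
  have hC := sqrt_mul_choose_le_two_mul_two_pow_half hn
  nlinarith [mul_le_mul_of_nonneg_right hκn (Nat.cast_nonneg ((n / 2).choose (n / 4)))]

namespace DminusCompletion

variable {κ : ℝ} {M : Finset (Fin n)} {P : Finset (↥M → Bool)} {F g : (Fin n → Bool) → Bool}

lemma apply_eq_true_iff_of_mem_lowSet (hF : DminusCompletion κ M P F) {x : Fin n → Bool}
    (hz : (splitEquiv M x).1 ∈ PsiSet M) (hw : (splitEquiv M x).2 ∈ lowSet κ M) :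
    F x = true ↔ (splitEquiv M x).1 ∉ P := by
  rw [mem_PsiSet, splitEquiv_apply_fst, ← wt_eq_boolWeight] at hz
  simp only [lowSet, mem_filter, mem_univ, true_and, splitEquiv_apply_snd,
    ← wt_eq_boolWeight] at hw
  have hquarter : ((n / 4 : ℕ) : ℝ) ≤ n / 4 := Nat.cast_div_le
  have hmaj : MajBar M x = false := by
    have : (wt Mᶜ x : ℝ) < (n / 4 : ℕ) := by linarith [Real.rpow_nonneg n.cast_nonneg κ]
    have : wt Mᶜ x < n / 4 := by exact_mod_cast this
    simpa [MajBar] using this.le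
  have hne : ¬ ErasedPt κ M x := fun h => by linarith [(abs_le.1 h.2).1]
  rw [hF.2.2 x hz hne, hmaj]
  by_cases hP : (splitEquiv M x).1 ∈ P <;> simp_all

lemma apply_eq_true_iff_of_mem_highSet (hF : DminusCompletion κ M P F) (hn : 4 ∣ n)
    {x : Fin n → Bool} (hz : (splitEquiv M x).1 ∈ PsiSet M)
    (hw : (splitEquiv M x).2 ∈ highSet κ M) :
    F x = true ↔ (splitEquiv M x).1 ∈ P := by
  rw [mem_PsiSet, splitEquiv_apply_fst, ← wt_eq_boolWeight] at hz
  simp only [highSet, mem_filter, mem_univ, true_and, splitEquiv_apply_snd,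
    ← wt_eq_boolWeight] at hw
  have hquarter : ((n / 4 : ℕ) : ℝ) = n / 4 := Nat.cast_div hn (by norm_num)
  have hmaj : MajBar M x = true := by
    have : ((n / 4 : ℕ) : ℝ) < wt Mᶜ x := by linarith [Real.rpow_nonneg n.cast_nonneg κ]
    have : n / 4 < wt Mᶜ x := by exact_mod_cast this
    simpa [MajBar] using this
  have hne : ¬ ErasedPt κ M x := fun h => by linarith [(abs_le.1 h.2).2]
  rw [hF.2.2 x hz hne, hmaj]
  by_cases hP : (splitEquiv M x).1 ∈ P <;> simp_all

lemma card_PsiSet_mul_card_lowSet_le_card_ne_of_dependsOn (hF : DminusCompletion κ M P F)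
    (hM : #M = n / 2) (hn : 4 ∣ n)
    (hg : ∀ x y : Fin n → Bool, (∀ i ∈ M, x i = y i) → g x = g y) :
    #(PsiSet M) * #(lowSet κ M) ≤ #{x | F x ≠ g x} := by
  set σ : (Fin n → Bool) → Fin n → Bool := fun x =>
    (splitEquiv M).symm ((splitEquiv M x).1, fun i => !(splitEquiv M x).2 i)
  have hσ (x : Fin n → Bool) :
      splitEquiv M (σ x) = ((splitEquiv M x).1, fun i => !(splitEquiv M x).2 i) := by
    simp only [σ, Equiv.apply_symm_apply]
  have hσσ : Function.Involutive σ := fun x =>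
    (splitEquiv M).injective (by rw [hσ, hσ]; simp only [Bool.not_not])
  rw [← card_filter_splitEquiv_mem]
  refine card_le_card_filter_ne_of_pairing hσσ.injective.injOn ?_ ?_ ?_
  · intro x hx hσx
    simp only [mem_filter, mem_univ, true_and, hσ] at hx hσx
    exact disjoint_left.1 (disjoint_lowSet_highSet κ M) hσx.2
      (compl_mem_highSet_of_mem_lowSet hM hn hx.2)
  · intro x hx
    simp only [mem_filter, mem_univ, true_and] at hx
    rw [Ne, Bool.eq_iff_iff, hF.apply_eq_true_iff_of_mem_lowSet hx.1 hx.2,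
      hF.apply_eq_true_iff_of_mem_highSet hn (by rw [hσ]; exact hx.1)
        (by rw [hσ]; exact compl_mem_highSet_of_mem_lowSet hM hn hx.2), hσ]
    tauto
  · intro x _
    exact hg _ _ fun i hi => congrFun (congrArg Prod.fst (hσ x)) ⟨i, hi⟩

lemma card_PsiSet_mul_card_lowSet_le_two_mul_card_ne_of_update (hF : DminusCompletion κ M P F)
    (hM : #M = n / 2) (hn : 4 ∣ n) {i : Fin n} (hi : i ∈ M)
    (hg : ∀ x, g (Function.update x i true) = g x) :
    #(PsiSet M) * #(lowSet κ M) ≤ 2 * #{x | F x ≠ g x} := by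
  set Ψ₀ := (PsiSet M).filter (· ⟨i, hi⟩ = false)
  have hΨ₀ : #(PsiSet M) = 2 * #Ψ₀ := by
    have hcard : Fintype.card ↥M = 2 * (n / 4) := by
      rw [Fintype.card_coe, hM]
      omega
    have := two_mul_card_boolWeight_eq_and_eq_false hcard ⟨i, hi⟩
    simp only [Ψ₀, PsiSet, filter_filter]
    exact this.symm
  set T : Finset (Fin n → Bool) :=
    ({x | (splitEquiv M x).1 ∈ Ψ₀ ∩ P ∧ (splitEquiv M x).2 ∈ lowSet κ M} : Finset _) ∪
      ({x | (splitEquiv M x).1 ∈ Ψ₀ \ P ∧ (splitEquiv M x).2 ∈ highSet κ M} : Finset _)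
  have hT : #T = #Ψ₀ * #(lowSet κ M) := by
    rw [card_union_of_disjoint, card_filter_splitEquiv_mem, card_filter_splitEquiv_mem,
      card_highSet hM hn, ← add_mul, card_inter_add_card_sdiff]
    refine disjoint_filter.2 fun x _ h₁ h₂ => (mem_sdiff.1 h₂.1).2 (mem_inter.1 h₁.1).2
  have hmemT (x) (hx : x ∈ T) : x i = false ∧ wt M x = n / 4 ∧ F x = false := by
    simp only [T, Ψ₀, mem_union, mem_filter, mem_univ, true_and, mem_inter, mem_sdiff] at hx
    rcases hx with ⟨⟨⟨hz, hzi⟩, hP⟩, hw⟩ | ⟨⟨⟨hz, hzi⟩, hP⟩, hw⟩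
    · exact ⟨hzi, (wt_eq_boolWeight M x).trans (mem_PsiSet.1 hz),
        Bool.eq_false_iff.2 fun h => (hF.apply_eq_true_iff_of_mem_lowSet hz hw).1 h hP⟩
    · exact ⟨hzi, (wt_eq_boolWeight M x).trans (mem_PsiSet.1 hz),
        Bool.eq_false_iff.2 fun h => hP ((hF.apply_eq_true_iff_of_mem_highSet hn hz hw).1 h)⟩
  have hTD : #T ≤ #{x | F x ≠ g x} := by
    refine card_le_card_filter_ne_of_pairing (σ := (Function.update · i true)) ?_ ?_ ?_ ?_
    · intro x hx y hy hxy
      funext j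
      by_cases hj : j = i
      · rw [hj, (hmemT x hx).1, (hmemT y hy).1]
      · simpa [Function.update_of_ne hj] using congrFun hxy j
    · intro x _ hσx
      simpa using (hmemT _ hσx).1
    · intro x hx
      obtain ⟨hxi, hwt, hFx⟩ := hmemT x hx
      rw [hFx, hF.2.1 _ (by rw [wt_update_true hi hxi, hwt]; omega)]
      simp
    · exact fun x _ => hg x
  calc #(PsiSet M) * #(lowSet κ M) = 2 * #T := by rw [hΨ₀, hT, mul_assoc]
    _ ≤ 2 * #{x | F x ≠ g x} := Nat.mul_le_mul_left 2 hTD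

lemma card_PsiSet_mul_card_lowSet_le (hF : DminusCompletion κ M P F) (hM : #M = n / 2)
    (hn : 4 ∣ n) (hg : isJunta (n / 2) g) :
    #(PsiSet M) * #(lowSet κ M) ≤ 2 * #{x | F x ≠ g x} := by
  obtain ⟨J, hJ, hgJ⟩ := hg
  by_cases hMJ : M ⊆ J
  · obtain rfl : J = M := (eq_of_subset_of_card_le hMJ (by omega)).symm
    exact (hF.card_PsiSet_mul_card_lowSet_le_card_ne_of_dependsOn hM hn hgJ).trans
      (Nat.le_mul_of_pos_left _ two_pos)
  · obtain ⟨i, hiM, hiJ⟩ := not_subset.1 hMJ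
    refine hF.card_PsiSet_mul_card_lowSet_le_two_mul_card_ne_of_update hM hn hiM fun x => ?_
    exact hgJ _ _ fun j hj => Function.update_of_ne (ne_of_mem_of_not_mem hj hiJ) _ _

end DminusCompletion

open Filter

lemma eventually_two_mul_ceil_rpow_add_one_le_sqrt_div_four {κ : ℝ} (hκ₀ : 0 ≤ κ)
    (hκ : κ < 1 / 2) : ∀ᶠ n : ℕ in atTop, 2 * ⌈(n : ℝ) ^ κ⌉₊ + 1 ≤ √n / 4 := by
  have hlim : Tendsto (fun n : ℕ => (n : ℝ) ^ (1 / 2 - κ)) atTop atTop :=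
    (tendsto_rpow_atTop (by linarith)).comp tendsto_natCast_atTop_atTop
  filter_upwards [hlim.eventually_ge_atTop 20, eventually_ge_atTop 1] with n hn hn1
  have hpow : 1 ≤ (n : ℝ) ^ κ := Real.one_le_rpow (by exact_mod_cast hn1) hκ₀
  have hceil : (⌈(n : ℝ) ^ κ⌉₊ : ℝ) ≤ (n : ℝ) ^ κ + 1 :=
    (Nat.ceil_lt_add_one (by positivity)).le
  have hsqrt : √n = (n : ℝ) ^ (1 / 2 - κ) * (n : ℝ) ^ κ := by
    rw [Real.sqrt_eq_rpow, ← Real.rpow_add (by positivity)]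
    ring_nf
  nlinarith [mul_le_mul_of_nonneg_right hn (by positivity : (0 : ℝ) ≤ (n : ℝ) ^ κ)]

lemma le_distJunta {k : ℕ} {F : (Fin n → Bool) → Bool} {d : ℝ}
    (h : ∀ g, isJunta k g → d ≤ (#{x | F x ≠ g x} : ℝ) / 2 ^ n) : d ≤ distJunta k F :=
  le_csInf ⟨_, fun _ => false, ⟨∅, by simp, fun _ _ _ => rfl⟩, rfl⟩
    fun _ ⟨g, hg, hd⟩ => hd ▸ h g hg

/-- every completion `F` of a `D⁻` instance is `Ω(1/√n)`-far
from being an `n/2`-junta. -/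
theorem stmt15 : ∀ κ : ℝ, 0 < κ → κ < 1 / 2 →
    ∃ c : ℝ, 0 < c ∧ ∃ n₀ : ℕ, ∀ n : ℕ, n₀ ≤ n → 4 ∣ n →
    ∀ M : Finset (Fin n), M.card = n / 2 →
    ∀ P : Finset (↥M → Bool), P ⊆ PsiSet M → 2 * P.card = (PsiSet M).card →
    ∀ F : (Fin n → Bool) → Bool, DminusCompletion κ M P F →
    c / Real.sqrt n ≤ distJunta (n / 2) F := by
  intro κ hκ₀ hκ
  obtain ⟨n₀, hn₀⟩ :=
    eventually_atTop.1 (eventually_two_mul_ceil_rpow_add_one_le_sqrt_div_four hκ₀.le hκ)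
  refine ⟨1 / 8, by norm_num, n₀, fun n hn hn4 M hM P _ _ F hF => le_distJunta fun g hg => ?_⟩
  have hκn := hn₀ n hn
  have hn0 : n ≠ 0 := by
    rintro rfl
    norm_num at hκn
    linarith
  have hcount : ((n / 2).choose (n / 4) * #(lowSet κ M) : ℝ) ≤ 2 * #{x | F x ≠ g x} := by
    exact_mod_cast card_PsiSet hM ▸ hF.card_PsiSet_mul_card_lowSet_le hM hn4 hg
  have hL := two_pow_half_le_four_mul_card_lowSet hM hn4 hκn
  have hC := two_pow_half_le_sqrt_mul_choose hn4 hn0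
  rw [div_le_div_iff₀ (Real.sqrt_pos.2 (by positivity)) (by positivity)]
  calc 1 / 8 * 2 ^ n = 1 / 8 * (2 ^ (n / 2) * 2 ^ (n / 2) : ℝ) := by
        rw [← pow_add]
        congr 2
        omega
    _ ≤ 1 / 8 * ((√n * (n / 2).choose (n / 4)) * (4 * #(lowSet κ M))) := by gcongr
    _ ≤ #{x | F x ≠ g x} * √n := by nlinarith
end

section
/- For every constant κ ∈ (0, 1/2) there exist c > 0 and n₀ such that the following holds for every multiple of 4, n ≥ n₀, every M ⊆ [n] with |M| = n/2, every P ⊆ Ψ_M with |P| = |Ψ_M|/2, and every completion F of the D⁻ instance determined by (M, P): for every coordinate i ∈ M and every function g : {0,1}^n → {0,1} that does not depend on coordinate i, |{x ∈ {0,1}^n : F(x) ≠ g(x)}| / 2^n ≥ c/√n. -/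
/-!
Let `N` be the set of non-erased points of the middle layer `|x_M| = n/4`. Complementing the
coordinates outside `M` is an involution of `N` that keeps `x_M` (hence `x_i`) and flips
`Maj(x_{M̄})`, so it negates `F`; thus `F x = x_i` on exactly half of `N`. At such a point,
flipping `x_i` leaves the middle layer, where `F` is forced to be `¬ x_i`, so `F` changes along
that `i`-edge while `g` does not: `F ≠ g` at one of its ends. These edges are disjoint, hence
`dist(F, g) ≥ |N| / 2`. Finally `|N| = C(n/2, n/4) · #{w ∈ {0,1}^{M̄} : ||w| - n/4| > n^κ}`;
since `C(2a, a) ≍ 4^a / √a` and `n^κ = o(√n)`, the band `||w| - n/4| ≤ n^κ` holds at most half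
of `{0,1}^{M̄}`, so `|N| ≳ 2^n / √n`.
-/

open Finset

attribute [local instance] Classical.propDecidable

variable {n : ℕ}

namespace Nat

theorem sixteen_pow_le_mul_centralBinom_sq (a : ℕ) :
    16 ^ a ≤ (4 * a + 1) * centralBinom a ^ 2 := by
  induction a with
  | zero => simp
  | succ a ih =>
    have hrec := succ_mul_centralBinom_succ a
    have hpoly : 16 * (a + 1) ^ 2 * (4 * a + 1) ≤ (4 * (a + 1) + 1) * (2 * (2 * a + 1)) ^ 2 := by
      ring_nf; omega
    refine le_of_mul_le_mul_left ?_ (by positivity : 0 < (a + 1) ^ 2)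
    calc (a + 1) ^ 2 * 16 ^ (a + 1) = 16 * (a + 1) ^ 2 * 16 ^ a := by ring
      _ ≤ 16 * (a + 1) ^ 2 * ((4 * a + 1) * centralBinom a ^ 2) := by gcongr
      _ = 16 * (a + 1) ^ 2 * (4 * a + 1) * centralBinom a ^ 2 := by ring
      _ ≤ (4 * (a + 1) + 1) * (2 * (2 * a + 1)) ^ 2 * centralBinom a ^ 2 := by gcongr
      _ = (a + 1) ^ 2 * ((4 * (a + 1) + 1) * centralBinom (a + 1) ^ 2) := by
          rw [mul_assoc, ← mul_pow, ← hrec]; ring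

theorem mul_centralBinom_sq_le_sixteen_pow (a : ℕ) :
    (3 * a + 1) * centralBinom a ^ 2 ≤ 16 ^ a := by
  induction a with
  | zero => simp
  | succ a ih =>
    have hrec := succ_mul_centralBinom_succ a
    have hpoly : (3 * (a + 1) + 1) * (2 * (2 * a + 1)) ^ 2 ≤ 16 * (a + 1) ^ 2 * (3 * a + 1) := by
      ring_nf; omega
    refine le_of_mul_le_mul_left ?_ (by positivity : 0 < (a + 1) ^ 2)
    calc (a + 1) ^ 2 * ((3 * (a + 1) + 1) * centralBinom (a + 1) ^ 2)
        = (3 * (a + 1) + 1) * (2 * (2 * a + 1)) ^ 2 * centralBinom a ^ 2 := by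
          rw [mul_assoc _ _ (centralBinom a ^ 2), ← mul_pow, ← hrec]; ring
      _ ≤ 16 * (a + 1) ^ 2 * (3 * a + 1) * centralBinom a ^ 2 := by gcongr
      _ = 16 * (a + 1) ^ 2 * ((3 * a + 1) * centralBinom a ^ 2) := by ring
      _ ≤ 16 * (a + 1) ^ 2 * 16 ^ a := by gcongr
      _ = (a + 1) ^ 2 * 16 ^ (a + 1) := by ring

end Nat

theorem card_wt_eq_and_wt_compl_eq (M : Finset (Fin n)) (j k : ℕ) :
    #{x : Fin n → Bool | wt M x = j ∧ wt Mᶜ x = k} = (#M).choose j * (#Mᶜ).choose k := by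
  rw [← card_powersetCard j M, ← card_powersetCard k Mᶜ, ← card_product]
  have hsplit : ∀ {A B : Finset (Fin n)}, A ⊆ M → B ⊆ Mᶜ →
      {i ∈ M | i ∈ A ∨ i ∈ B} = A ∧ {i ∈ Mᶜ | i ∈ A ∨ i ∈ B} = B := by
    intro A B hA hB
    constructor <;> ext i <;> have := @hA i <;> have := @hB i <;>
      simp only [mem_filter, mem_compl] at * <;> tauto
  refine card_nbij' (fun x => ({i ∈ M | x i = true}, {i ∈ Mᶜ | x i = true}))
    (fun p i => decide (i ∈ p.1 ∨ i ∈ p.2)) ?_ ?_ ?_ ?_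
  · intro x hx
    rw [mem_coe, mem_filter] at hx
    simpa [wt] using hx.2
  · rintro ⟨A, B⟩ h
    simp only [coe_product, Set.mem_prod, mem_coe, mem_powersetCard] at h
    obtain ⟨hA, hB⟩ := hsplit h.1.1 h.2.1
    rw [mem_coe, mem_filter]
    simp [wt, hA, hB, h]
  · intro x _
    funext i
    by_cases hi : i ∈ M <;> simp [hi]
  · rintro ⟨A, B⟩ h
    simp only [coe_product, Set.mem_prod, mem_coe, mem_powersetCard] at h
    obtain ⟨hA, hB⟩ := hsplit h.1.1 h.2.1
    simp [hA, hB]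

theorem card_wt_eq_and_wt_compl_mem (M : Finset (Fin n)) (j : ℕ) (K : Finset ℕ) :
    #{x : Fin n → Bool | wt M x = j ∧ wt Mᶜ x ∈ K} =
      (#M).choose j * ∑ k ∈ K, (#Mᶜ).choose k := by
  rw [card_eq_sum_card_fiberwise (f := wt Mᶜ) (t := K) (fun x hx => by simp_all), mul_sum]
  refine sum_congr rfl fun k hk => ?_
  rw [filter_filter, ← card_wt_eq_and_wt_compl_eq]
  congr 1
  ext x
  simp only [mem_filter, mem_univ, true_and]
  constructor
  · exact fun h => ⟨h.1.1, h.2⟩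
  · rintro ⟨h1, rfl⟩
    exact ⟨⟨h1, hk⟩, rfl⟩

noncomputable def farWeights (a : ℕ) (r : ℝ) : Finset ℕ :=
  (range (2 * a + 1)).filter fun k => r < |(k : ℝ) - a|

theorem four_pow_le_sum_choose_farWeights_add (a : ℕ) (r : ℝ) :
    4 ^ a ≤ ∑ k ∈ farWeights a r, (2 * a).choose k + (2 * ⌈r⌉₊ + 1) * Nat.centralBinom a := by
  set near := (range (2 * a + 1)).filter fun k : ℕ => ¬ r < |(k : ℝ) - a|
  have hnear : #near ≤ 2 * ⌈r⌉₊ + 1 := by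
    calc #near ≤ #(Icc (a - ⌈r⌉₊) (a + ⌈r⌉₊)) := by
          refine card_le_card fun k hk => ?_
          rw [mem_filter, not_lt, abs_le] at hk
          have hr := Nat.le_ceil r
          have h1 : (k : ℝ) ≤ a + ⌈r⌉₊ := by linarith
          have h2 : (a : ℝ) ≤ k + ⌈r⌉₊ := by linarith
          rw [mem_Icc]
          exact ⟨Nat.sub_le_of_le_add (by exact_mod_cast h2), by exact_mod_cast h1⟩
      _ ≤ 2 * ⌈r⌉₊ + 1 := by rw [Nat.card_Icc]; omega
  calc 4 ^ a = ∑ k ∈ range (2 * a + 1), (2 * a).choose k := by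
        rw [Nat.sum_range_choose, pow_mul]; norm_num
    _ = ∑ k ∈ farWeights a r, (2 * a).choose k + ∑ k ∈ near, (2 * a).choose k :=
        (sum_filter_add_sum_filter_not _ _ _).symm
    _ ≤ ∑ k ∈ farWeights a r, (2 * a).choose k + #near • Nat.centralBinom a := by
        gcongr
        exact sum_le_card_nsmul _ _ _ fun k _ => Nat.choose_le_centralBinom k a
    _ ≤ _ := by rw [smul_eq_mul]; gcongr

def flipOutside (M : Finset (Fin n)) (x : Fin n → Bool) : Fin n → Bool :=
  fun j => if j ∈ M then x j else !x j

theorem flipOutside_flipOutside (M : Finset (Fin n)) (x : Fin n → Bool) :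
    flipOutside M (flipOutside M x) = x := by
  funext j; by_cases hj : j ∈ M <;> simp [flipOutside, hj]

theorem flipOutside_of_mem {M : Finset (Fin n)} {j : Fin n} (hj : j ∈ M) (x : Fin n → Bool) :
    flipOutside M x j = x j := if_pos hj

theorem wt_flipOutside (M : Finset (Fin n)) (x : Fin n → Bool) :
    wt M (flipOutside M x) = wt M x :=
  congrArg card <| filter_congr fun _ hj => by rw [flipOutside_of_mem hj]

theorem wt_compl_flipOutside (M : Finset (Fin n)) (x : Fin n → Bool) :
    wt Mᶜ (flipOutside M x) = #Mᶜ - wt Mᶜ x := by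
  have hflip : wt Mᶜ (flipOutside M x) = #{j ∈ Mᶜ | ¬ x j = true} :=
    congrArg card <| filter_congr fun j hj => by simp_all [flipOutside]
  rw [hflip, wt, ← card_filter_add_card_filter_not (s := Mᶜ) (fun j => x j = true)]
  omega

theorem card_compl_eq_two_mul (M : Finset (Fin n)) (h4 : 4 ∣ n) (hM : #M = n / 2) :
    #Mᶜ = 2 * (n / 4) := by
  rw [card_compl, Fintype.card_fin, hM]; omega

noncomputable def middleNotErased (κ : ℝ) (M : Finset (Fin n)) : Finset (Fin n → Bool) :=
  {x | wt M x = n / 4 ∧ ¬ ErasedPt κ M x}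

theorem mem_middleNotErased {κ : ℝ} {M : Finset (Fin n)} (h4 : 4 ∣ n) {x : Fin n → Bool} :
    x ∈ middleNotErased κ M ↔
      wt M x = n / 4 ∧ (n : ℝ) ^ κ < |(wt Mᶜ x : ℝ) - (n / 4 : ℕ)| := by
  have hcast : (n : ℝ) / 4 = ((n / 4 : ℕ) : ℝ) := by
    rw [Nat.cast_div h4 (by norm_num)]; norm_num
  simp only [middleNotErased, mem_filter, mem_univ, true_and, ErasedPt, hcast, not_and, not_le]
  exact ⟨fun h => ⟨h.1, h.2 h.1⟩, fun h => ⟨h.1, fun _ => h.2⟩⟩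

theorem card_middleNotErased (κ : ℝ) (M : Finset (Fin n)) (h4 : 4 ∣ n) (hM : #M = n / 2) :
    #(middleNotErased κ M) =
      Nat.centralBinom (n / 4) * ∑ k ∈ farWeights (n / 4) ((n : ℝ) ^ κ), (2 * (n / 4)).choose k := by
  have hMc := card_compl_eq_two_mul M h4 hM
  have hcount := card_wt_eq_and_wt_compl_mem M (n / 4) (farWeights (n / 4) ((n : ℝ) ^ κ))
  rw [hM, hMc, show n / 2 = 2 * (n / 4) by omega, ← Nat.centralBinom_eq_two_mul_choose] at hcount
  rw [← hcount]
  congr 1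
  ext x
  have hle : wt Mᶜ x ≤ 2 * (n / 4) := hMc ▸ card_filter_le _ _
  rw [mem_middleNotErased h4, mem_filter, farWeights, mem_filter, mem_range]
  simp only [mem_univ, true_and]
  exact ⟨fun h => ⟨h.1, by omega, h.2⟩, fun h => ⟨h.1, h.2.2⟩⟩

theorem flipOutside_mem_middleNotErased {κ : ℝ} {M : Finset (Fin n)} (h4 : 4 ∣ n)
    (hM : #M = n / 2) {x : Fin n → Bool} (hx : x ∈ middleNotErased κ M) :
    flipOutside M x ∈ middleNotErased κ M := by
  rw [mem_middleNotErased h4] at hx ⊢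
  have hMc := card_compl_eq_two_mul M h4 hM
  have hle : wt Mᶜ x ≤ 2 * (n / 4) := hMc ▸ card_filter_le _ _
  rw [wt_flipOutside, wt_compl_flipOutside, hMc, Nat.cast_sub hle]
  refine ⟨hx.1, lt_of_lt_of_eq hx.2 ?_⟩
  rw [← abs_neg]; push_cast; ring_nf

theorem majBar_flipOutside {κ : ℝ} {M : Finset (Fin n)} (h4 : 4 ∣ n) (hM : #M = n / 2)
    {x : Fin n → Bool} (hx : x ∈ middleNotErased κ M) :
    MajBar M (flipOutside M x) = !MajBar M x := by
  rw [mem_middleNotErased h4] at hx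
  have hMc := card_compl_eq_two_mul M h4 hM
  have hle : wt Mᶜ x ≤ 2 * (n / 4) := hMc ▸ card_filter_le _ _
  have hne : wt Mᶜ x ≠ n / 4 := by
    rintro heq
    rw [heq, sub_self, abs_zero] at hx
    exact not_lt_of_ge (Real.rpow_nonneg (Nat.cast_nonneg n) κ) hx.2
  rw [MajBar, MajBar, wt_compl_flipOutside, hMc]
  by_cases h : n / 4 < wt Mᶜ x
  · rw [decide_eq_true h, decide_eq_false (by omega)]; rfl
  · rw [decide_eq_false h, decide_eq_true (by omega)]; rfl

theorem DminusCompletion.apply_flipOutside {κ : ℝ} {M : Finset (Fin n)} {P : Finset (↥M → Bool)}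
    {F : (Fin n → Bool) → Bool} (hF : DminusCompletion κ M P F) (h4 : 4 ∣ n) (hM : #M = n / 2)
    {x : Fin n → Bool} (hx : x ∈ middleNotErased κ M) :
    F (flipOutside M x) = !F x := by
  have hmaj := majBar_flipOutside h4 hM hx
  have hx' := flipOutside_mem_middleNotErased h4 hM hx
  simp only [middleNotErased, mem_filter, mem_univ, true_and] at hx hx'
  have hrestr : (fun j : ↥M => flipOutside M x j) = fun j : ↥M => x j :=
    funext fun j => flipOutside_of_mem j.2 x
  rw [hF.2.2 _ hx.1 hx.2, hF.2.2 _ hx'.1 hx'.2, hrestr, hmaj]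
  split_ifs <;> simp

theorem card_middleNotErased_eq_two_mul {κ : ℝ} {M : Finset (Fin n)} {P : Finset (↥M → Bool)}
    {F : (Fin n → Bool) → Bool} (hF : DminusCompletion κ M P F) (h4 : 4 ∣ n) (hM : #M = n / 2)
    {i : Fin n} (hi : i ∈ M) :
    #(middleNotErased κ M) = 2 * #{x ∈ middleNotErased κ M | F x = x i} := by
  rw [← card_filter_add_card_filter_not (fun x => F x = x i), two_mul]
  congr 1
  have hswap : ∀ x ∈ middleNotErased κ M, (F (flipOutside M x) = flipOutside M x i ↔ ¬ F x = x i) := by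
    intro x hx
    rw [hF.apply_flipOutside h4 hM hx, flipOutside_of_mem hi]
    cases F x <;> cases x i <;> simp
  refine (card_nbij' (flipOutside M) (flipOutside M) ?_ ?_ ?_ ?_).symm
  · intro x hx
    simp only [coe_filter, Set.mem_ofPred_eq] at hx ⊢
    exact ⟨flipOutside_mem_middleNotErased h4 hM hx.1, by rw [hswap x hx.1]; exact not_not.mpr hx.2⟩
  · intro x hx
    simp only [coe_filter, Set.mem_ofPred_eq] at hx ⊢
    exact ⟨flipOutside_mem_middleNotErased h4 hM hx.1, (hswap x hx.1).mpr hx.2⟩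
  · exact fun x _ => flipOutside_flipOutside M x
  · exact fun x _ => flipOutside_flipOutside M x

theorem card_le_card_ne_of_flipC {F g : (Fin n → Bool) → Bool} {i : Fin n}
    (hg : ∀ x, g x = g (flipC x i)) {A : Finset (Fin n → Bool)}
    (hF : ∀ z ∈ A, F (flipC z i) ≠ F z) (hA : ∀ z ∈ A, flipC z i ∉ A) :
    #A ≤ #{x | F x ≠ g x} := by
  refine card_le_card_of_injOn (fun z => if F z = g z then flipC z i else z) ?_ ?_
  · intro z hz
    simp only [coe_filter, mem_univ, true_and, Set.mem_ofPred_eq]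
    split_ifs with h
    · rw [← hg, ← h]; exact hF z hz
    · exact h
  · intro z hz z' hz' h
    simp only at h
    split_ifs at h with h1 h2 h2
    · simpa [flipC] using congrArg (flipC · i) h
    · exact absurd (h ▸ hz') (hA z hz)
    · exact absurd (h ▸ hz) (hA z' hz')
    · exact h

theorem wt_flipC_add_one_of_true {M : Finset (Fin n)} {i : Fin n} (hi : i ∈ M)
    {x : Fin n → Bool} (hx : x i = true) : wt M (flipC x i) + 1 = wt M x := by
  have hfil : {j ∈ M | flipC x i j = true} = {j ∈ M | x j = true}.erase i := by
    ext j
    rcases eq_or_ne j i with rfl | h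
    · simp [flipC, hx]
    · simp [flipC, Function.update_apply, h]
  rw [wt, wt, hfil]
  exact card_erase_add_one (mem_filter.mpr ⟨hi, hx⟩)

theorem wt_flipC_of_false {M : Finset (Fin n)} {i : Fin n} (hi : i ∈ M)
    {x : Fin n → Bool} (hx : x i = false) : wt M (flipC x i) = wt M x + 1 := by
  have hfil : {j ∈ M | flipC x i j = true} = insert i {j ∈ M | x j = true} := by
    ext j
    rcases eq_or_ne j i with rfl | h
    · simp [flipC, hx, hi]
    · simp [flipC, Function.update_apply, h]
  rw [wt, wt, hfil, card_insert_of_notMem (by simp [hx])]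

theorem wt_flipC_ne {M : Finset (Fin n)} {i : Fin n} (hi : i ∈ M) (x : Fin n → Bool) :
    wt M (flipC x i) ≠ wt M x := by
  cases hx : x i
  · rw [wt_flipC_of_false hi hx]; omega
  · have := wt_flipC_add_one_of_true hi hx; omega

theorem DminusCompletion.apply_flipC {κ : ℝ} {M : Finset (Fin n)} {P : Finset (↥M → Bool)}
    {F : (Fin n → Bool) → Bool} (hF : DminusCompletion κ M P F) {i : Fin n} (hi : i ∈ M)
    {z : Fin n → Bool} (hz : wt M z = n / 4) : F (flipC z i) = !z i := by
  cases hzi : z i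
  · exact hF.2.1 _ (by rw [wt_flipC_of_false hi hzi]; omega)
  · exact hF.1 _ (by have := wt_flipC_add_one_of_true hi hzi; omega)

theorem card_filter_eq_le_card_ne {κ : ℝ} {M : Finset (Fin n)} {P : Finset (↥M → Bool)}
    {F : (Fin n → Bool) → Bool} (hF : DminusCompletion κ M P F) {i : Fin n} (hi : i ∈ M)
    {g : (Fin n → Bool) → Bool} (hg : ∀ x, g x = g (flipC x i)) :
    #{x ∈ middleNotErased κ M | F x = x i} ≤ #{x | F x ≠ g x} := by
  have hmid : ∀ z ∈ {x ∈ middleNotErased κ M | F x = x i}, wt M z = n / 4 := fun z hz =>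
    ((mem_filter.mp (mem_filter.mp hz).1).2).1
  refine card_le_card_ne_of_flipC hg (fun z hz => ?_) (fun z hz hflip => ?_)
  · rw [hF.apply_flipC hi (hmid z hz), (mem_filter.mp hz).2]; simp
  · exact wt_flipC_ne hi z ((hmid _ hflip).trans (hmid z hz).symm)

theorem exists_sixteen_mul_sq_le {κ : ℝ} (hκ : κ < 1 / 2) :
    ∃ n₀ : ℕ, ∀ n ≥ n₀, 16 * (2 * ⌈(n : ℝ) ^ κ⌉₊ + 1) ^ 2 ≤ n := by
  have hsmall : ∀ᶠ x : ℝ in Filter.atTop, x ^ (κ - 1 / 2) ≤ 1 / 16 :=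
    (by simpa using tendsto_rpow_neg_atTop (by linarith : 0 < 1 / 2 - κ) :
      Filter.Tendsto (fun x : ℝ => x ^ (κ - 1 / 2)) Filter.atTop (nhds 0)).eventually_le_const
      (by norm_num)
  have hreal : ∀ᶠ x : ℝ in Filter.atTop, 16 * (2 * (⌈x ^ κ⌉₊ : ℝ) + 1) ^ 2 ≤ x := by
    filter_upwards [hsmall, Filter.eventually_ge_atTop 576] with x hx hx576
    have hx0 : 0 < x := by linarith
    have hsqrt : 24 ≤ √x := Real.le_sqrt_of_sq_le (by linarith)
    have hpow : x ^ κ ≤ √x / 16 := by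
      rw [Real.sqrt_eq_rpow, show κ = (κ - 1 / 2) + 1 / 2 by ring, Real.rpow_add hx0]
      nlinarith [Real.rpow_nonneg hx0.le (1 / 2 : ℝ)]
    have hceil : 2 * (⌈x ^ κ⌉₊ : ℝ) + 1 ≤ √x / 4 := by
      linarith [Nat.ceil_lt_add_one (Real.rpow_nonneg hx0.le κ)]
    calc 16 * (2 * (⌈x ^ κ⌉₊ : ℝ) + 1) ^ 2 ≤ 16 * (√x / 4) ^ 2 := by gcongr
      _ = x := by rw [div_pow, Real.sq_sqrt hx0.le]; ring
  obtain ⟨n₀, hn₀⟩ := Filter.eventually_atTop.mp (tendsto_natCast_atTop_atTop.eventually hreal)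
  exact ⟨n₀, fun n hn => by exact_mod_cast hn₀ n hn⟩

theorem sixteen_pow_sq_le_of_counts {a T B K S D : ℕ} (hT : 4 * T ^ 2 ≤ a)
    (hBup : (3 * a + 1) * B ^ 2 ≤ 16 ^ a) (hBlo : 16 ^ a ≤ (4 * a + 1) * B ^ 2)
    (hK : 4 ^ a ≤ K + T * B) (hS : B * K = 2 * S) (hD : S ≤ D) :
    16 ^ a * 16 ^ a ≤ 16 * (4 * a + 1) * D ^ 2 := by
  have h16 : (16 : ℕ) ^ a = (4 ^ a) ^ 2 := by rw [← pow_mul, mul_comm, pow_mul]; norm_num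
  have hTB : 2 * T * B ≤ 4 ^ a := by
    rw [← Nat.pow_le_pow_iff_left two_ne_zero, ← h16]
    calc (2 * T * B) ^ 2 = 4 * T ^ 2 * B ^ 2 := by ring
      _ ≤ (3 * a + 1) * B ^ 2 := by gcongr; omega
      _ ≤ 16 ^ a := hBup
  have hBD : B * 4 ^ a ≤ 4 * D := by
    have : 4 ^ a ≤ 2 * K := by nlinarith
    nlinarith
  calc 16 ^ a * 16 ^ a ≤ (4 * a + 1) * B ^ 2 * 16 ^ a := by gcongr
    _ = (4 * a + 1) * (B * 4 ^ a) ^ 2 := by rw [h16]; ring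
    _ ≤ (4 * a + 1) * (4 * D) ^ 2 := by gcongr
    _ = 16 * (4 * a + 1) * D ^ 2 := by ring

theorem inv_six_div_sqrt_le {n a D : ℕ} (hn : n = 4 * a) (ha : 1 ≤ a)
    (h : 16 ^ a * 16 ^ a ≤ 16 * (4 * a + 1) * D ^ 2) :
    1 / 6 / √(n : ℝ) ≤ (D : ℝ) / 2 ^ n := by
  subst hn
  have hsqrt : 0 < √((4 * a : ℕ) : ℝ) := Real.sqrt_pos.mpr (by positivity)
  rw [div_le_div_iff₀ hsqrt (by positivity), one_div_mul_eq_div, div_le_iff₀ (by norm_num),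
    ← pow_le_pow_iff_left₀ (by positivity) (by positivity) two_ne_zero]
  have hR : ((16 : ℝ) ^ a * 16 ^ a) ≤ 16 * (4 * a + 1) * D ^ 2 := by exact_mod_cast h
  have ha' : (1 : ℝ) ≤ a := by exact_mod_cast ha
  calc ((2 : ℝ) ^ (4 * a)) ^ 2 = 16 ^ a * 16 ^ a := by
        rw [show (16 : ℝ) = 2 ^ 4 by norm_num, ← pow_mul, ← pow_mul, ← pow_add]
        ring_nf
    _ ≤ 16 * (4 * a + 1) * D ^ 2 := hR
    _ ≤ 36 * (4 * a) * D ^ 2 := by gcongr ?_ * _; linarith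
    _ = (D * √((4 * a : ℕ) : ℝ) * 6) ^ 2 := by
        rw [mul_pow, mul_pow, Real.sq_sqrt (by positivity)]; push_cast; ring

/-- for every completion `F` of a `D⁻` instance, every `i ∈ M`,
and every `g` not depending on coordinate `i`, `F` and `g` differ on at least a
`c/√n` fraction of points. -/
theorem stmt16 : ∀ κ : ℝ, 0 < κ → κ < 1 / 2 →
    ∃ c : ℝ, 0 < c ∧ ∃ n₀ : ℕ, ∀ n : ℕ, n₀ ≤ n → 4 ∣ n →
    ∀ M : Finset (Fin n), M.card = n / 2 →
    ∀ P : Finset (↥M → Bool), P ⊆ PsiSet M → 2 * P.card = (PsiSet M).card →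
    ∀ F : (Fin n → Bool) → Bool, DminusCompletion κ M P F →
    ∀ i ∈ M, ∀ g : (Fin n → Bool) → Bool, (∀ x, g x = g (flipC x i)) →
    c / Real.sqrt n ≤ ((univ.filter fun x => F x ≠ g x).card : ℝ) / 2 ^ n := by
  intro κ _ hκ
  obtain ⟨n₀, hn₀⟩ := exists_sixteen_mul_sq_le hκ
  refine ⟨1 / 6, by norm_num, max n₀ 4, fun n hn h4 M hM P _ _ F hF i hi g hg => ?_⟩
  have hT : 4 * (2 * ⌈(n : ℝ) ^ κ⌉₊ + 1) ^ 2 ≤ n / 4 := by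
    have := hn₀ n (le_of_max_le_left hn); omega
  have hS := card_middleNotErased_eq_two_mul hF h4 hM hi
  rw [card_middleNotErased κ M h4 hM] at hS
  refine inv_six_div_sqrt_le (by omega) (by omega) <| sixteen_pow_sq_le_of_counts hT
    (Nat.mul_centralBinom_sq_le_sixteen_pow _) (Nat.sixteen_pow_le_mul_centralBinom_sq _)
    (four_pow_le_sum_choose_farWeights_add _ _) hS (card_filter_eq_le_card_ne hF hi hg)
end

section
/- Let n ≥ 3 be odd and define f : {0,1}^n → {0,1} by f(0^n) = 1, f(1^n) = 0, and, for all other x, f(x) = 1 if |x| > n/2 and f(x) = 0 otherwise (the majority function). Then dist(f, Mono) = 2/2^n and (1/2^n)·Σ_{x ∈ {0,1}^n} √(I_f⁻(x)) ≥ n/2^n. -/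
open Finset

attribute [local instance] Classical.propDecidable

variable {n : ℕ}

/-!
The majority function is monotone and differs from `f` exactly at `0ⁿ` and `1ⁿ`. Conversely,
`(0ⁿ, e_i)` and `(ē_i, 1ⁿ)`, with `ē_i` the complement of `e_i`, are two disjoint comparable
pairs on which `f` decreases, and a monotone function must disagree with `f` at a point of each.
Finally every unit vector `e_i` is the upper end of the decreasing edge `{0ⁿ, e_i}`, so at least
`n` points have `I_f⁻ ≥ 1`.
-/

lemma wt_mono (M : Finset (Fin n)) {x y : Fin n → Bool} (hxy : ∀ i, x i ≤ y i) :
    wt M x ≤ wt M y :=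
  card_le_card fun i hi => by
    simp only [mem_filter] at hi ⊢
    exact ⟨hi.1, Bool.eq_true_of_true_le (hi.2 ▸ hxy i)⟩

lemma monoB.ne_or_ne_of_violation {f g : (Fin n → Bool) → Bool} (hg : monoB g)
    {x y : Fin n → Bool} (hxy : ∀ i, x i ≤ y i) (hx : f x = true) (hy : f y = false) :
    f x ≠ g x ∨ f y ≠ g y := by
  by_contra! h
  have := hg x y hxy
  rw [← h.1, ← h.2, hx, hy] at this
  exact absurd this (by decide)

lemma monoB.two_le_card_ne_of_disjoint_violations {f g : (Fin n → Bool) → Bool} (hg : monoB g)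
    {x y x' y' : Fin n → Bool} (hxy : ∀ i, x i ≤ y i) (hx : f x = true) (hy : f y = false)
    (hxy' : ∀ i, x' i ≤ y' i) (hx' : f x' = true) (hy' : f y' = false)
    (hdisj : Disjoint ({x, y} : Finset _) {x', y'}) :
    2 ≤ (univ.filter fun z => f z ≠ g z).card := by
  obtain ⟨u, hu, hfu⟩ : ∃ u ∈ ({x, y} : Finset _), f u ≠ g u := by
    rcases hg.ne_or_ne_of_violation hxy hx hy with h | h <;> simp [h]
  obtain ⟨v, hv, hfv⟩ : ∃ v ∈ ({x', y'} : Finset _), f v ≠ g v := by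
    rcases hg.ne_or_ne_of_violation hxy' hx' hy' with h | h <;> simp [h]
  exact one_lt_card.mpr ⟨u, by simpa using hfu, v, by simpa using hfv,
    fun huv => disjoint_left.mp hdisj hu (huv ▸ hv)⟩

lemma distMono_eq_of_forall_le {f g₀ : (Fin n → Bool) → Bool} {k : ℕ} (hg₀ : monoB g₀)
    (hk : (univ.filter fun x => f x ≠ g₀ x).card = k)
    (hle : ∀ g, monoB g → k ≤ (univ.filter fun x => f x ≠ g x).card) :
    distMono f = k / 2 ^ n := by
  refine IsLeast.csInf_eq ⟨⟨g₀, hg₀, by rw [hk]⟩, ?_⟩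
  rintro _ ⟨g, hg, rfl⟩
  gcongr
  exact_mod_cast hle g hg

lemma card_Iminus_pos_le_sum_sqrt (f : (Fin n → Bool) → Bool) :
    ((univ.filter fun x => 0 < Iminus f x).card : ℝ) ≤ ∑ x, √(Iminus f x : ℝ) := by
  rw [card_eq_sum_ones, Nat.cast_sum, Nat.cast_one]
  calc ∑ x ∈ univ.filter (fun x => 0 < Iminus f x), (1 : ℝ)
      ≤ ∑ x ∈ univ.filter (fun x => 0 < Iminus f x), √(Iminus f x : ℝ) :=
        sum_le_sum fun x hx => Real.one_le_sqrt.mpr (by exact_mod_cast (mem_filter.mp hx).2)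
    _ ≤ ∑ x, √(Iminus f x : ℝ) :=
        sum_le_sum_of_subset_of_nonneg (subset_univ _) fun _ _ _ => Real.sqrt_nonneg _

lemma Iminus_pos_of_decEdge {f : (Fin n → Bool) → Bool} {x : Fin n → Bool} {i : Fin n}
    (h : decEdge f x i) : 0 < Iminus f x :=
  card_pos.mpr ⟨i, mem_filter.mpr ⟨mem_univ _, h⟩⟩

def basisVec (i : Fin n) : Fin n → Bool := fun j => decide (j = i)

def coBasisVec (i : Fin n) : Fin n → Bool := fun j => decide (j ≠ i)

lemma wt_univ_basisVec (i : Fin n) : wt univ (basisVec i) = 1 := by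
  simp [wt, basisVec, filter_eq']

lemma wt_univ_coBasisVec (i : Fin n) : wt univ (coBasisVec i) = n - 1 := by
  simp [wt, coBasisVec, filter_ne', card_erase_of_mem]

@[simp] lemma wt_univ_false : wt univ (fun _ : Fin n => false) = 0 := by
  simp [wt]

@[simp] lemma wt_univ_true : wt univ (fun _ : Fin n => true) = n := by
  simp [wt]

lemma ne_of_wt_univ_ne {x y : Fin n → Bool} (h : wt univ x ≠ wt univ y) : x ≠ y :=
  fun hxy => h (congrArg _ hxy)

lemma basisVec_injective : Function.Injective (basisVec (n := n)) := fun i j h => by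
  simpa [basisVec] using congrFun h i

noncomputable def majority (x : Fin n → Bool) : Bool := decide (n < 2 * wt univ x)

lemma monoB_majority : monoB (majority (n := n)) := fun x y hxy => by
  unfold majority
  by_cases h : n < 2 * wt univ x
  · simp [show n < 2 * wt univ y by linarith [wt_mono univ hxy]]
  · simp [h]

section ModifiedMajority

variable {f : (Fin n → Bool) → Bool}
  (hf : ∀ x, f x = if x = (fun _ => false) then true
    else if x = (fun _ => true) then false else majority x)
include hf

lemma modMaj_zero : f (fun _ => false) = true := by
  simp [hf]

lemma modMaj_one (hn : 0 < n) : f (fun _ => true) = false := by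
  have h01 : (fun _ : Fin n => true) ≠ fun _ => false :=
    ne_of_wt_univ_ne (by rw [wt_univ_true, wt_univ_false]; omega)
  rw [hf, if_neg h01, if_pos rfl]

lemma modMaj_basisVec (hn : 2 ≤ n) (i : Fin n) : f (basisVec i) = false := by
  have h0 : basisVec i ≠ fun _ => false :=
    ne_of_wt_univ_ne (by rw [wt_univ_basisVec, wt_univ_false]; omega)
  have h1 : basisVec i ≠ fun _ => true :=
    ne_of_wt_univ_ne (by rw [wt_univ_basisVec, wt_univ_true]; omega)
  rw [hf, if_neg h0, if_neg h1, majority, wt_univ_basisVec]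
  exact decide_eq_false (by omega)

lemma modMaj_coBasisVec (hn : 3 ≤ n) (i : Fin n) : f (coBasisVec i) = true := by
  have h0 : coBasisVec i ≠ fun _ => false :=
    ne_of_wt_univ_ne (by rw [wt_univ_coBasisVec, wt_univ_false]; omega)
  have h1 : coBasisVec i ≠ fun _ => true :=
    ne_of_wt_univ_ne (by rw [wt_univ_coBasisVec, wt_univ_true]; omega)
  rw [hf, if_neg h0, if_neg h1, majority, wt_univ_coBasisVec]
  exact decide_eq_true (by omega)

lemma card_modMaj_ne_majority (hn : 0 < n) :
    (univ.filter fun x => f x ≠ majority x).card = 2 := by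
  have h01 : (fun _ : Fin n => false) ≠ fun _ => true :=
    ne_of_wt_univ_ne (by rw [wt_univ_true, wt_univ_false]; omega)
  suffices univ.filter (fun x => f x ≠ majority x) = {fun _ => false, fun _ => true} by
    rw [this, card_pair h01]
  ext x
  by_cases hx0 : x = fun _ => false
  · simp [hx0, hf, majority]
  by_cases hx1 : x = fun _ => true
  · simp [hx1, hf, h01.symm, majority, hn]
  · simp [hf, hx0, hx1]

lemma two_le_card_modMaj_ne (hn : 3 ≤ n) {g : (Fin n → Bool) → Bool} (hg : monoB g) :
    2 ≤ (univ.filter fun x => f x ≠ g x).card := by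
  let i : Fin n := ⟨0, by omega⟩
  refine hg.two_le_card_ne_of_disjoint_violations (x := fun _ => false) (y := basisVec i)
    (x' := coBasisVec i) (y' := fun _ => true) (fun _ => Bool.false_le _) (modMaj_zero hf)
    (modMaj_basisVec hf (by omega) i) (fun _ => Bool.le_true _) (modMaj_coBasisVec hf hn i)
    (modMaj_one hf (by omega)) ?_
  simp only [disjoint_insert_left, disjoint_insert_right, mem_insert, mem_singleton,
    disjoint_singleton, not_or]
  refine ⟨⟨?_, ?_⟩, ?_, ?_⟩ <;> apply ne_of_wt_univ_ne <;>
    simp [wt_univ_basisVec, wt_univ_coBasisVec] <;> omega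

lemma decEdge_modMaj_basisVec (hn : 2 ≤ n) (i : Fin n) : decEdge f (basisVec i) i := by
  have h0 : Function.update (basisVec i) i false = fun _ => false := by
    funext j
    by_cases hj : j = i <;> simp [basisVec, hj]
  have h1 : Function.update (basisVec i) i true = basisVec i := by
    funext j
    by_cases hj : j = i <;> simp [basisVec, hj]
  exact ⟨by rw [h0]; exact modMaj_zero hf, by rw [h1]; exact modMaj_basisVec hf hn i⟩

lemma le_card_Iminus_modMaj_pos (hn : 2 ≤ n) :
    n ≤ (univ.filter fun x => 0 < Iminus f x).card := by
  have hbasis : univ.map ⟨basisVec, basisVec_injective⟩ ⊆ univ.filter fun x => 0 < Iminus f x :=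
    fun x hx => by
      obtain ⟨i, -, rfl⟩ := mem_map.mp hx
      exact mem_filter.mpr ⟨mem_univ _, Iminus_pos_of_decEdge (decEdge_modMaj_basisVec hf hn i)⟩
  simpa using card_le_card hbasis

end ModifiedMajority

theorem stmt17_general (n : ℕ) (hn : 3 ≤ n) (f : (Fin n → Bool) → Bool)
    (hf : ∀ x : Fin n → Bool,
      f x = if x = (fun _ => false) then true
        else if x = (fun _ => true) then false
        else decide (n < 2 * (univ.filter fun i => x i = true).card)) :
    distMono f = 2 / 2 ^ n ∧
    (n : ℝ) / 2 ^ n ≤ (1 / 2 ^ n) * ∑ x : Fin n → Bool, Real.sqrt (Iminus f x) := by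
  have hf' : ∀ x, f x = if x = (fun _ => false) then true
      else if x = (fun _ => true) then false else majority x := hf
  refine ⟨?_, ?_⟩
  · exact_mod_cast distMono_eq_of_forall_le monoB_majority
      (card_modMaj_ne_majority hf' (by omega)) fun g hg => two_le_card_modMaj_ne hf' hn hg
  · rw [one_div_mul_eq_div]
    gcongr
    calc (n : ℝ) ≤ (univ.filter fun x => 0 < Iminus f x).card :=
          mod_cast le_card_Iminus_modMaj_pos hf' (by omega)
      _ ≤ ∑ x, √(Iminus f x : ℝ) := card_Iminus_pos_le_sum_sqrt f

/-- for odd `n ≥ 3` and the majority function modified at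
`0^n` and `1^n`, `dist(f, Mono) = 2/2^n` while `(1/2^n)·Σ_x √(I_f⁻(x)) ≥ n/2^n`. -/
theorem stmt17 (n : ℕ) (hn : 3 ≤ n) (hodd : Odd n) (f : (Fin n → Bool) → Bool)
    (hf : ∀ x : Fin n → Bool,
      f x = if x = (fun _ => false) then true
        else if x = (fun _ => true) then false
        else decide (n < 2 * (univ.filter fun i => x i = true).card)) :
    distMono f = 2 / 2 ^ n ∧
    (n : ℝ) / 2 ^ n ≤ (1 / 2 ^ n) * ∑ x : Fin n → Bool, Real.sqrt (Iminus f x) :=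
  stmt17_general n hn f hf
end
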